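/- arXiv:1807.00626 — 8 statements merged into one kernel-verified Lean document; each statement's English description precedes it below -/
import Mathlib

section
/- For every ε ∈ (0, 1/2) there exists a constant C = C(ε) > 0 such that for all n, R ∈ ℕ with εn ≤ R ≤ n/2 and every α ∈ (ε, 1−ε), there exists M ⊆ B_n(R) with |M| = ⌊α|B_n(R)|⌋ whose vertex boundary in the Hamming ball graph B_n(R) satisfies |∂_{B_n(R)} M| ≤ (C/√n) · min(|M|, |B_n(R) ∖ M|). -/
open Finset

/-- the family of subsets of `{1,…,n}` of size exactly `r` -/
def sphere (n r : ℕ) : Finset (Finset (Fin n)) :=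
  Finset.univ.filter (fun X => X.card = r)

/-- the family of subsets of `{1,…,n}` of size at most `R` -/
def hamBall (n R : ℕ) : Finset (Finset (Fin n)) :=
  Finset.univ.filter (fun X => X.card ≤ R)

/-- vertex boundary of `A` in the Hamming ball graph `B_n(R)`: vertices of the ball, not in
`A`, adjacent (symmetric difference of size one) to a member of `A` -/
def ballBoundary (n R : ℕ) (A : Finset (Finset (Fin n))) : Finset (Finset (Fin n)) :=
  (hamBall n R).filter (fun Y => Y ∉ A ∧ ∃ X ∈ A, (symmDiff X Y).card = 1)

/-!
Let `A` be the first half of the coordinates and grade the ball by `g X = |X ∩ A|`. Taking for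
`M` the `⌊α|B|⌋` elements of smallest grade, every boundary vertex has grade `t` or `t + 1`,
where `t` is the largest grade in `M`, since `g` changes by at most one along an edge. So it
suffices that every grade class of `B_n(R)` has at most `C/√n · |B_n(R)|` elements; the minimum
is of order `|B_n(R)|` because `α` stays away from `0` and `1`.

Within the sphere of radius `k`, the grade class `t` has the hypergeometric size
`C(n/2, t) C(n - n/2, k - t)`. These numbers are unimodal with mode `k/2`, and for `εn ≤ k` their
consecutive ratios stay above `1 - O(1/√n)` on a window of length `≍ √n` right of the mode, so
the mode is at most `O(1/√n)` of their sum `C(n, k)`. Spheres of radius below `εn/8` are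
negligible: shifting the radius up by `k₀ ≈ εn/8` multiplies `C(n, k)` by at least `2^k₀ ≥ √n`.
-/

section Counting

variable {α : Type*} [DecidableEq α]

theorem card_inter_le_card_inter_add_card_symmDiff (X Y A : Finset α) :
    #(Y ∩ A) ≤ #(X ∩ A) + #(symmDiff X Y) := by
  refine (card_le_card fun y hy => ?_).trans (card_union_le (X ∩ A) (symmDiff X Y))
  by_cases hyX : y ∈ X <;> simp_all [mem_symmDiff]

theorem exists_subset_card_eq_forall_le {β : Type*} [LinearOrder β] (B : Finset α) (g : α → β)
    {N : ℕ} (hN : N ≤ #B) : ∃ M ⊆ B, #M = N ∧ ∀ X ∈ M, ∀ Y ∈ B \ M, g X ≤ g Y := by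
  induction N with
  | zero => exact ⟨∅, empty_subset _, card_empty, by simp⟩
  | succ N ih =>
    obtain ⟨M, hMB, hM, hle⟩ := ih (by omega)
    obtain ⟨Y, hY, hYmin⟩ := exists_min_image (B \ M) g (by
      rw [← card_pos, card_sdiff_of_subset hMB]; omega)
    have hYM : Y ∉ M := (mem_sdiff.mp hY).2
    refine ⟨insert Y M, insert_subset (mem_sdiff.mp hY).1 hMB,
      by rw [card_insert_of_notMem hYM, hM], fun X hX Z hZ => ?_⟩
    have hZ' : Z ∈ B \ M := by
      simp only [mem_sdiff, mem_insert, not_or] at hZ ⊢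
      exact ⟨hZ.1, hZ.2.2⟩
    rcases mem_insert.mp hX with rfl | hX
    · exact hYmin Z hZ'
    · exact hle X hX Z hZ'

theorem card_filter_card_eq_card_inter_eq [Fintype α] (A : Finset α) {k t : ℕ} (htk : t ≤ k) :
    #{X : Finset α | #X = k ∧ #(X ∩ A) = t} = (#A).choose t * (#Aᶜ).choose (k - t) := by
  rw [← card_powersetCard, ← card_powersetCard, ← card_product]
  refine card_bij' (fun X _ => (X ∩ A, X \ A)) (fun p _ => p.1 ∪ p.2) ?_ ?_ ?_ ?_
  · intro X hX
    simp only [mem_filter, mem_univ, true_and] at hX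
    have := card_inter_add_card_sdiff X A
    simp only [mem_product, mem_powersetCard, subset_compl_iff_disjoint_right]
    exact ⟨⟨inter_subset_right, hX.2⟩, sdiff_disjoint, by omega⟩
  · rintro ⟨Y, Z⟩ hp
    simp only [mem_product, mem_powersetCard, subset_compl_iff_disjoint_right] at hp
    obtain ⟨⟨hYA, hY⟩, hZA, hZ⟩ := hp
    simp only [mem_filter, mem_univ, true_and]
    refine ⟨by rw [card_union_of_disjoint (disjoint_of_subset_left hYA hZA.symm)]; omega, ?_⟩
    rw [union_inter_distrib_right, inter_eq_left.mpr hYA, disjoint_iff_inter_eq_empty.mp hZA,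
      union_empty, hY]
  · intro X _
    exact sup_inf_sdiff X A
  · rintro ⟨Y, Z⟩ hp
    simp only [mem_product, mem_powersetCard, subset_compl_iff_disjoint_right] at hp
    obtain ⟨⟨hYA, -⟩, hZA, -⟩ := hp
    rw [union_inter_distrib_right, inter_eq_left.mpr hYA, disjoint_iff_inter_eq_empty.mp hZA,
      union_empty, union_sdiff_distrib, sdiff_eq_empty_iff_subset.mpr hYA,
      sdiff_eq_self_of_disjoint hZA, empty_union]

end Counting

section Binomial

theorem two_pow_mul_choose_le_choose_add {n j : ℕ} :
    ∀ {i : ℕ}, 3 * (j + i) ≤ n → 2 ^ i * n.choose j ≤ n.choose (j + i)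
  | 0, _ => by simp
  | i + 1, h => by
    have hstep : 2 * n.choose (j + i) ≤ n.choose (j + i + 1) := by
      refine Nat.le_of_mul_le_mul_right (c := j + i + 1) ?_ (by omega)
      rw [Nat.choose_succ_right_eq, mul_right_comm, mul_comm]
      exact Nat.mul_le_mul_left _ (by omega)
    calc 2 ^ (i + 1) * n.choose j = 2 * (2 ^ i * n.choose j) := by ring
      _ ≤ 2 * n.choose (j + i) :=
        Nat.mul_le_mul_left _ (two_pow_mul_choose_le_choose_add (by omega))
      _ ≤ n.choose (j + (i + 1)) := hstep

theorem sqrt_mul_sum_range_choose_le {n k₀ : ℕ} (hn : 6 * k₀ ≤ n) (hk₀ : √n ≤ k₀) :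
    √n * ∑ k ∈ range k₀, (n.choose k : ℝ) ≤ ∑ k ∈ range (2 * k₀), (n.choose k : ℝ) := by
  have hshift : 2 ^ k₀ * ∑ k ∈ range k₀, n.choose k ≤ ∑ k ∈ range (2 * k₀), n.choose k := by
    rw [two_mul, sum_range_add, mul_sum]
    refine le_add_left (sum_le_sum fun k hk => ?_)
    rw [add_comm k₀]
    exact two_pow_mul_choose_le_choose_add (by rw [mem_range] at hk; omega)
  have hpow : √n ≤ 2 ^ k₀ := hk₀.trans (by exact_mod_cast Nat.lt_two_pow_self.le)
  calc √n * ∑ k ∈ range k₀, (n.choose k : ℝ) ≤ 2 ^ k₀ * ∑ k ∈ range k₀, (n.choose k : ℝ) :=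
        mul_le_mul_of_nonneg_right hpow (by positivity)
    _ ≤ ∑ k ∈ range (2 * k₀), (n.choose k : ℝ) := by exact_mod_cast hshift

end Binomial

section Estimates

theorem mul_sqrt_le_mul_of_div_le_sqrt {ε c x : ℝ} (hε : 0 < ε) (hx : 0 ≤ x) (h : c / ε ≤ √x) :
    c * √x ≤ ε * x := by
  rw [div_le_iff₀ hε] at h
  calc c * √x ≤ √x * ε * √x := mul_le_mul_of_nonneg_right h (Real.sqrt_nonneg x)
    _ = ε * x := by rw [mul_comm √x ε, mul_assoc, Real.mul_self_sqrt hx]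

theorem exists_nat_half_le_le {y : ℝ} (hy : 1 ≤ y) : ∃ s : ℕ, y / 2 ≤ s ∧ (s : ℝ) ≤ y := by
  refine ⟨⌊y⌋₊, ?_, Nat.floor_le (by linarith)⟩
  have h₁ : (1 : ℝ) ≤ ⌊y⌋₊ := by exact_mod_cast (Nat.one_le_floor_iff y).mpr hy
  linarith [Nat.lt_floor_add_one y]

theorem mul_le_two_mul_sum_range_of_one_sub_mul_le {f : ℕ → ℝ} {δ : ℝ} {a₀ s : ℕ}
    (hf : 0 ≤ f a₀) (hδ₁ : δ ≤ 1) (hsδ : s * δ ≤ 1 / 2)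
    (hstep : ∀ b, a₀ ≤ b → b < a₀ + s → (1 - δ) * f b ≤ f (b + 1)) :
    s * f a₀ ≤ 2 * ∑ u ∈ range s, f (a₀ + u) := by
  have hchain : ∀ u < s, (1 - δ) ^ u * f a₀ ≤ f (a₀ + u) := by
    intro u
    induction u with
    | zero => simp
    | succ u ih =>
      intro hu
      calc (1 - δ) ^ (u + 1) * f a₀ = (1 - δ) * ((1 - δ) ^ u * f a₀) := by ring
        _ ≤ (1 - δ) * f (a₀ + u) := mul_le_mul_of_nonneg_left (ih (by omega)) (by linarith)
        _ ≤ f (a₀ + (u + 1)) := hstep _ (by omega) (by omega)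
  have hhalf : ∀ u ∈ range s, f a₀ / 2 ≤ f (a₀ + u) := by
    intro u hu
    rw [mem_range] at hu
    have hus : (u : ℝ) ≤ s := by exact_mod_cast hu.le
    have hbern : 1 + u * (-δ) ≤ (1 - δ) ^ u := by
      simpa [sub_eq_add_neg] using one_add_mul_le_pow (by linarith : (-2 : ℝ) ≤ -δ) u
    have huδ : u * δ ≤ 1 / 2 := by
      rcases le_or_gt 0 δ with hδ | hδ
      · nlinarith
      · nlinarith [Nat.cast_nonneg (α := ℝ) u]
    nlinarith [hchain u hu]
  have := card_nsmul_le_sum _ _ _ hhalf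
  rw [card_range, nsmul_eq_mul] at this
  linarith

theorem half_mul_le_min_floor {ε α b : ℝ} (hε : 0 ≤ ε) (hb : 0 ≤ b) (hα : ε < α)
    (hα' : α < 1 - ε) (hN : 1 ≤ ⌊α * b⌋₊) : ε / 2 * b ≤ min (⌊α * b⌋₊ : ℝ) (b - ⌊α * b⌋₊) := by
  have hαb : 0 ≤ α * b := mul_nonneg (by linarith) hb
  have h₁ : (1 : ℝ) ≤ ⌊α * b⌋₊ := by exact_mod_cast hN
  have h₂ : α * b < ⌊α * b⌋₊ + 1 := Nat.lt_floor_add_one _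
  have h₃ : (⌊α * b⌋₊ : ℝ) ≤ α * b := Nat.floor_le hαb
  refine le_min ?_ ?_ <;> nlinarith

end Estimates

section Hypergeometric

def splitCount (n k a : ℕ) : ℕ := (n / 2).choose a * (n - n / 2).choose (k - a)

theorem sum_splitCount (n k : ℕ) : ∑ a ∈ range (k + 1), splitCount n k a = n.choose k := by
  conv_rhs => rw [← Nat.add_sub_of_le (Nat.div_le_self n 2), Nat.add_choose_eq,
    Nat.sum_antidiagonal_eq_sum_range_succ_mk]
  rfl

theorem splitCount_succ_mul (n k a : ℕ) (hak : a < k) :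
    splitCount n k (a + 1) * ((a + 1) * (n - n / 2 - (k - (a + 1))))
      = splitCount n k a * ((n / 2 - a) * (k - a)) := by
  have h₁ := Nat.choose_succ_right_eq (n / 2) a
  have h₂ := Nat.choose_succ_right_eq (n - n / 2) (k - (a + 1))
  rw [show k - (a + 1) + 1 = k - a by omega] at h₂
  unfold splitCount
  calc _ = (n / 2).choose (a + 1) * (a + 1) *
        ((n - n / 2).choose (k - (a + 1)) * (n - n / 2 - (k - (a + 1)))) := by ring
    _ = _ := by rw [h₁, ← h₂]; ring

theorem splitCount_le_succ {n k a : ℕ} (hkn : 2 * k ≤ n) (ha : a < k / 2) :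
    splitCount n k a ≤ splitCount n k (a + 1) := by
  refine Nat.le_of_mul_le_mul_right (c := (a + 1) * (n - n / 2 - (k - (a + 1)))) ?_
    (Nat.mul_pos (by omega) (by omega))
  rw [splitCount_succ_mul n k a (by omega)]
  exact Nat.mul_le_mul_left _ (by rw [mul_comm]; exact Nat.mul_le_mul (by omega) (by omega))

theorem splitCount_succ_le {n k a : ℕ} (hkn : 2 * k ≤ n) (ha : k / 2 ≤ a) (hak : a < k) :
    splitCount n k (a + 1) ≤ splitCount n k a := by
  refine Nat.le_of_mul_le_mul_right (c := (a + 1) * (n - n / 2 - (k - (a + 1)))) ?_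
    (Nat.mul_pos (by omega) (by omega))
  rw [splitCount_succ_mul n k a hak]
  exact Nat.mul_le_mul_left _ (by rw [mul_comm]; exact Nat.mul_le_mul (by omega) (by omega))

theorem splitCount_le_splitCount_half {n k a : ℕ} (hkn : 2 * k ≤ n) (hak : a ≤ k) :
    splitCount n k a ≤ splitCount n k (k / 2) := by
  rcases le_or_gt a (k / 2) with ha | ha
  · have : ∀ b, a ≤ b → b ≤ k / 2 → splitCount n k a ≤ splitCount n k b := by
      intro b hab
      induction b, hab using Nat.le_induction with
      | base => exact fun _ => le_rfl
      | succ b _ ih => exact fun hb => (ih (by omega)).trans (splitCount_le_succ hkn (by omega))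
    exact this _ ha le_rfl
  · have : ∀ b, k / 2 ≤ b → b ≤ k → splitCount n k b ≤ splitCount n k (k / 2) := by
      intro b hb
      induction b, hb using Nat.le_induction with
      | base => exact fun _ => le_rfl
      | succ b hb ih =>
        exact fun hbk => (splitCount_succ_le hkn hb (by omega)).trans (ih (by omega))
    exact this a ha.le hak

/-- With `m = n/2`, the two sides are the factors `P` and `Q` of `splitCount_succ_mul` at `x`:
for `x` within `√n` of `k/2`, `P - Q = O(n√n)` while `P ≥ x² ≥ (εn/4)²`. -/
theorem one_sub_div_sqrt_mul_le {ε n k m x : ℝ} (hε : 0 < ε) (hεn : 2 ≤ ε * n) (hk : ε * n ≤ k)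
    (hkn : 2 * k ≤ n) (hm : n / 2 - 1 / 2 ≤ m) (hm' : m ≤ n / 2) (hx : (k - 1) / 2 ≤ x)
    (hx' : x ≤ k / 2 + √n) :
    (1 - 96 / ε ^ 2 / √n) * ((x + 1) * (n - m - (k - x - 1))) ≤ (m - x) * (k - x) := by
  have hn : 0 ≤ n := by nlinarith
  obtain ⟨s, hs, rfl⟩ : ∃ s, 0 ≤ s ∧ n = s ^ 2 := ⟨√n, Real.sqrt_nonneg n, (Real.sq_sqrt hn).symm⟩
  rw [Real.sqrt_sq hs] at hx' ⊢
  have hs1 : 1 ≤ s := by nlinarith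
  have hxε : ε * s ^ 2 / 4 ≤ x := by linarith
  have hP : x ^ 2 ≤ (x + 1) * (s ^ 2 - m - (k - x - 1)) := by nlinarith
  have hPQ : (x + 1) * (s ^ 2 - m - (k - x - 1)) - (m - x) * (k - x) ≤ 6 * s ^ 3 := by nlinarith
  have hδ : 6 * s ^ 3 ≤ 96 / ε ^ 2 / s * x ^ 2 := by
    rw [div_div, div_mul_eq_mul_div, le_div_iff₀ (by positivity)]
    have : (ε * s ^ 2 / 4) ^ 2 ≤ x ^ 2 := pow_le_pow_left₀ (by positivity) hxε 2
    nlinarith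
  nlinarith [mul_le_mul_of_nonneg_left hP (by positivity : (0 : ℝ) ≤ 96 / ε ^ 2 / s)]

theorem one_sub_div_sqrt_mul_splitCount_le {ε : ℝ} (hε : 0 < ε) {n k b : ℕ}
    (hεn : 2 ≤ ε * n) (hk : ε * n ≤ k) (hkn : 2 * k ≤ n) (hb : k / 2 ≤ b) (hbk : b < k)
    (hb' : (b : ℝ) ≤ k / 2 + √n) :
    (1 - 96 / ε ^ 2 / √n) * splitCount n k b ≤ splitCount n k (b + 1) := by
  have hm : ((n / 2 : ℕ) : ℝ) * 2 ≤ n ∧ (n : ℝ) ≤ (n / 2 : ℕ) * 2 + 1 := by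
    constructor <;> norm_cast <;> omega
  set m : ℝ := ((n / 2 : ℕ) : ℝ)
  have hkn' : 2 * (k : ℝ) ≤ n := by exact_mod_cast hkn
  have hb2 : (k : ℝ) ≤ 2 * b + 1 := by exact_mod_cast (by omega : k ≤ 2 * b + 1)
  have hP : 0 < ((b : ℝ) + 1) * (n - m - (k - b - 1)) := mul_pos (by positivity) (by linarith)
  have key : (splitCount n k (b + 1) : ℝ) * ((b + 1) * (n - m - (k - b - 1)))
      = splitCount n k b * ((m - b) * (k - b)) := by
    have := congrArg (Nat.cast (R := ℝ)) (splitCount_succ_mul n k b hbk)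
    push_cast [Nat.cast_sub (show n / 2 ≤ n by omega), Nat.cast_sub (show b + 1 ≤ k by omega),
      Nat.cast_sub (show b ≤ n / 2 by omega), Nat.cast_sub hbk.le,
      Nat.cast_sub (show k - (b + 1) ≤ n - n / 2 by omega)] at this
    linear_combination this
  have hstep := one_sub_div_sqrt_mul_le (m := m) hε hεn hk hkn' (by linarith) (by linarith)
    (by linarith) hb'
  refine le_of_mul_le_mul_right ?_ hP
  rw [key]
  nlinarith [Nat.cast_nonneg (α := ℝ) (splitCount n k b)]

theorem sum_range_splitCount_half_add_le {n k s : ℕ} (hs : k / 2 + s ≤ k + 1) :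
    ∑ u ∈ range s, splitCount n k (k / 2 + u) ≤ n.choose k := by
  rw [← sum_splitCount, show k + 1 = k / 2 + (k + 1 - k / 2) by omega, sum_range_add]
  exact le_add_left (sum_le_sum_of_subset (range_subset_range.mpr (by omega)))

theorem splitCount_le_div_sqrt_mul_choose {ε : ℝ} (hε : 0 < ε) {n k a : ℕ}
    (hn : 2 * (96 / ε ^ 2) + 4 / ε ≤ √n) (hk : ε * n ≤ k) (hkn : 2 * k ≤ n) (hak : a ≤ k) :
    (splitCount n k a : ℝ) ≤ 8 * (96 / ε ^ 2) / √n * n.choose k := by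
  set c := 96 / ε ^ 2 with hc
  have hc₀ : 0 < c := by positivity
  have h4ε : 0 < 4 / ε := by positivity
  have hsqrt₀ : 0 < √n := by linarith
  have hεn : 4 * √n ≤ ε * n := mul_sqrt_le_mul_of_div_le_sqrt hε n.cast_nonneg (by linarith)
  have hkn' : 2 * (k : ℝ) ≤ n := by exact_mod_cast hkn
  have hc₁ : 1 ≤ c := by rw [hc, le_div_iff₀ (by positivity)]; nlinarith
  -- window length: still `≍ √n`, but short enough that `(1 - c/√n)^s ≥ 1/2`
  obtain ⟨s, hs₁, hs₂⟩ := exists_nat_half_le_le (y := √n / (2 * c))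
    (by rw [le_div_iff₀ (by positivity)]; linarith)
  have hk₂ : ((k / 2 : ℕ) : ℝ) ≤ k / 2 := by
    rw [le_div_iff₀ two_pos]; exact_mod_cast Nat.div_mul_le_self k 2
  have hs₃ : (s : ℝ) ≤ √n := hs₂.trans (div_le_self hsqrt₀.le (by linarith))
  have hwindow : k / 2 + s ≤ k := by
    have : ((k / 2 + s : ℕ) : ℝ) ≤ k := by push_cast; linarith
    exact_mod_cast this
  have hδ : (s : ℝ) * (c / √n) ≤ 1 / 2 := by
    rw [le_div_iff₀ (by positivity)] at hs₂
    rw [mul_div_assoc', div_le_iff₀ hsqrt₀]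
    linarith
  have hsum := mul_le_two_mul_sum_range_of_one_sub_mul_le (f := fun a => (splitCount n k a : ℝ))
    (a₀ := k / 2) (Nat.cast_nonneg _) (by rw [div_le_one hsqrt₀]; linarith) hδ
    (fun b hb hbs => one_sub_div_sqrt_mul_splitCount_le hε (by linarith) hk hkn hb (by omega) (by
      have : (b : ℝ) < (k / 2 : ℕ) + s := by exact_mod_cast hbs
      linarith))
  have hsub : ∑ u ∈ range s, (splitCount n k (k / 2 + u) : ℝ) ≤ n.choose k := by
    exact_mod_cast sum_range_splitCount_half_add_le (by omega)
  have hmax : (splitCount n k a : ℝ) ≤ splitCount n k (k / 2) := by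
    exact_mod_cast splitCount_le_splitCount_half hkn hak
  have hmode : √n / (2 * c) / 2 * splitCount n k (k / 2) ≤ 2 * n.choose k := by
    nlinarith [mul_le_mul_of_nonneg_right hs₁ (Nat.cast_nonneg (α := ℝ) (splitCount n k (k / 2)))]
  rw [div_mul_eq_mul_div, le_div_iff₀ hsqrt₀]
  field_simp at hmode
  nlinarith

end Hypergeometric

section Fibers

def firstHalf (n : ℕ) : Finset (Fin n) := {i | (i : ℕ) < n / 2}

def ballFiber (n R t : ℕ) : Finset (Finset (Fin n)) :=
  {X ∈ hamBall n R | #(X ∩ firstHalf n) = t}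

theorem pos_of_one_lt_card {n : ℕ} {S : Finset (Finset (Fin n))} (h : 1 < #S) : 0 < n :=
  Nat.pos_of_ne_zero fun hn => by
    subst hn
    have := card_le_univ S
    simp only [Fintype.card_finset, Fintype.card_fin, pow_zero] at this
    omega

theorem card_firstHalf (n : ℕ) : #(firstHalf n) = n / 2 := by
  rw [firstHalf, Fin.card_filter_val_lt]
  omega

theorem card_sphere (n k : ℕ) : #(sphere n k) = n.choose k := by
  have : sphere n k = powersetCard k univ := by ext; simp [sphere]
  rw [this, card_powersetCard, card_univ, Fintype.card_fin]

theorem card_filter_sphere_eq_splitCount {n k t : ℕ} (htk : t ≤ k) :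
    #{X ∈ sphere n k | #(X ∩ firstHalf n) = t} = splitCount n k t := by
  rw [sphere, filter_filter, card_filter_card_eq_card_inter_eq _ htk, card_compl, card_firstHalf,
    Fintype.card_fin, splitCount]

theorem card_filter_hamBall (n R : ℕ) (p : Finset (Fin n) → Prop) [DecidablePred p] :
    #{X ∈ hamBall n R | p X} = ∑ k ∈ range (R + 1), #{X ∈ sphere n k | p X} := by
  rw [card_eq_sum_card_fiberwise (f := card) (t := range (R + 1))]
  · refine sum_congr rfl fun k hk => congrArg card ?_
    ext X
    simp only [hamBall, sphere, mem_filter, mem_univ, true_and, mem_range] at hk ⊢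
    constructor
    · rintro ⟨⟨-, h⟩, rfl⟩; exact ⟨rfl, h⟩
    · rintro ⟨rfl, h⟩; exact ⟨⟨by omega, h⟩, rfl⟩
  · intro X hX
    simp only [hamBall, coe_filter, mem_filter, mem_univ, true_and, Set.mem_ofPred_eq, coe_range,
      Set.mem_Iio, Order.lt_add_one_iff] at hX ⊢
    exact hX.1

theorem card_hamBall (n R : ℕ) : #(hamBall n R) = ∑ k ∈ range (R + 1), n.choose k := by
  simpa [card_sphere] using card_filter_hamBall n R (fun _ => True)

theorem card_filter_sphere_le_div_sqrt_mul_choose {ε : ℝ} (hε : 0 < ε) {n k : ℕ} (t : ℕ)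
    (hn : 2 * (96 / ε ^ 2) + 4 / ε ≤ √n) (hk : ε * n ≤ k) (hkn : 2 * k ≤ n) :
    (#{X ∈ sphere n k | #(X ∩ firstHalf n) = t} : ℝ) ≤ 8 * (96 / ε ^ 2) / √n * n.choose k := by
  rcases le_or_gt t k with htk | hkt
  · rw [card_filter_sphere_eq_splitCount htk]
    exact splitCount_le_div_sqrt_mul_choose hε hn hk hkn htk
  · have : {X ∈ sphere n k | #(X ∩ firstHalf n) = t} = ∅ := by
      refine filter_false_of_mem fun X hX hXt => ?_
      simp only [sphere, mem_filter, mem_univ, true_and] at hX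
      have := card_le_card (inter_subset_left (s₁ := X) (s₂ := firstHalf n))
      omega
    rw [this, card_empty, Nat.cast_zero]
    positivity

theorem sum_range_card_filter_sphere_le {n R k₀ : ℕ} (t : ℕ) (hn : 6 * k₀ ≤ n)
    (hR : 2 * k₀ ≤ R + 1) (hk₀ : √n ≤ k₀) (hsqrt₀ : 0 < √n) :
    ∑ k ∈ range k₀, (#{X ∈ sphere n k | #(X ∩ firstHalf n) = t} : ℝ)
      ≤ 1 / √n * #(hamBall n R) := by
  have hslice : ∑ k ∈ range k₀, (#{X ∈ sphere n k | #(X ∩ firstHalf n) = t} : ℝ)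
      ≤ ∑ k ∈ range k₀, (n.choose k : ℝ) := sum_le_sum fun k _ => by
    exact_mod_cast (card_filter_le _ _).trans (card_sphere n k).le
  have hball : ∑ k ∈ range (2 * k₀), (n.choose k : ℝ) ≤ #(hamBall n R) := by
    rw [card_hamBall, Nat.cast_sum]
    exact sum_le_sum_of_subset_of_nonneg (range_subset_range.mpr hR) fun _ _ _ => by positivity
  have := sqrt_mul_sum_range_choose_le hn hk₀
  rw [one_div_mul_eq_div, le_div_iff₀ hsqrt₀]
  nlinarith

theorem sum_range_card_filter_sphere_add_le {ε : ℝ} (hε : 0 < ε) {n R k₀ : ℕ} (t : ℕ)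
    (hn : 2 * (96 / ε ^ 2) + 4 / ε ≤ √n) (hk₀ : ε * n ≤ k₀) (hk₀R : k₀ ≤ R + 1) (hRn : 2 * R ≤ n) :
    ∑ u ∈ range (R + 1 - k₀), (#{X ∈ sphere n (k₀ + u) | #(X ∩ firstHalf n) = t} : ℝ)
      ≤ 8 * (96 / ε ^ 2) / √n * #(hamBall n R) := by
  calc _ ≤ ∑ u ∈ range (R + 1 - k₀), 8 * (96 / ε ^ 2) / √n * (n.choose (k₀ + u) : ℝ) := by
        refine sum_le_sum fun u hu => card_filter_sphere_le_div_sqrt_mul_choose hε t hn ?_ ?_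
        · push_cast; linarith
        · rw [mem_range] at hu; omega
    _ ≤ 8 * (96 / ε ^ 2) / √n * #(hamBall n R) := by
        rw [← mul_sum, card_hamBall, Nat.cast_sum]
        refine mul_le_mul_of_nonneg_left ?_ (by positivity)
        conv_rhs => rw [← Nat.add_sub_of_le hk₀R, sum_range_add]
        exact le_add_of_nonneg_left (sum_nonneg fun _ _ => by positivity)

theorem card_ballFiber_le {ε : ℝ} (hε : 0 < ε) {n R : ℕ} (t : ℕ)
    (hn : 2 * (96 / (ε / 8) ^ 2) + 4 / (ε / 8) ≤ √n) (hR : ε * n ≤ R) (hRn : 2 * R ≤ n) :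
    (#(ballFiber n R t) : ℝ) ≤ (8 * (96 / (ε / 8) ^ 2) + 1) / √n * #(hamBall n R) := by
  have hsqrt₀ : 0 < √n := lt_of_lt_of_le (by positivity) hn
  have hεn : 4 * √n ≤ ε / 8 * n :=
    mul_sqrt_le_mul_of_div_le_sqrt (by positivity) n.cast_nonneg
      (by linarith [show 0 ≤ 2 * (96 / (ε / 8) ^ 2) by positivity])
  have hRn' : 2 * (R : ℝ) ≤ n := by exact_mod_cast hRn
  have hsqrt₁ : 1 ≤ √n := by nlinarith [Real.mul_self_sqrt (Nat.cast_nonneg (α := ℝ) n)]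
  set k₀ := ⌈ε / 8 * n⌉₊
  have hk₀ : ε / 8 * n ≤ k₀ := Nat.le_ceil _
  have hk₀' : (k₀ : ℝ) < ε / 8 * n + 1 := Nat.ceil_lt_add_one (by positivity)
  have h2k₀ : 2 * k₀ ≤ R + 1 := by
    have : ((2 * k₀ : ℕ) : ℝ) ≤ R + 1 := by push_cast; linarith
    exact_mod_cast this
  have h6k₀ : 6 * k₀ ≤ n := by
    have : ((6 * k₀ : ℕ) : ℝ) ≤ n := by push_cast; nlinarith
    exact_mod_cast this
  have hlow := sum_range_card_filter_sphere_le t h6k₀ h2k₀ (by linarith) hsqrt₀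
  have hhigh := sum_range_card_filter_sphere_add_le (by positivity) t hn hk₀ (by omega) hRn
  rw [ballFiber, card_filter_hamBall, Nat.cast_sum, show R + 1 = k₀ + (R + 1 - k₀) by omega,
    sum_range_add, add_div, add_mul]
  linarith

theorem exists_card_ballFiber_le {ε : ℝ} (hε : 0 < ε) :
    ∃ C, 0 < C ∧ ∀ n R t : ℕ, 0 < n → ε * n ≤ R → 2 * R ≤ n →
      (#(ballFiber n R t) : ℝ) ≤ C / √n * #(hamBall n R) := by
  set C₀ := 8 * (96 / (ε / 8) ^ 2) + 1
  set x₀ := 2 * (96 / (ε / 8) ^ 2) + 4 / (ε / 8)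
  refine ⟨max C₀ x₀, by positivity, fun n R t hn hR hRn => ?_⟩
  have hsqrt₀ : 0 < √n := Real.sqrt_pos.mpr (by exact_mod_cast hn)
  rcases le_or_gt x₀ √n with hx | hx
  · exact (card_ballFiber_le hε t hx hR hRn).trans (by gcongr; exact le_max_left _ _)
  · calc (#(ballFiber n R t) : ℝ) ≤ #(hamBall n R) := by exact_mod_cast card_filter_le _ _
      _ ≤ max C₀ x₀ / √n * #(hamBall n R) := by
        refine le_mul_of_one_le_left (by positivity) ?_
        rw [one_le_div hsqrt₀]
        exact hx.le.trans (le_max_right _ _)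

theorem ballBoundary_subset_ballFiber_union {n R : ℕ} {M : Finset (Finset (Fin n))}
    (hM : ∀ X ∈ M, ∀ Y ∈ hamBall n R \ M, #(X ∩ firstHalf n) ≤ #(Y ∩ firstHalf n)) :
    ballBoundary n R M ⊆ ballFiber n R (M.sup fun X => #(X ∩ firstHalf n)) ∪
      ballFiber n R ((M.sup fun X => #(X ∩ firstHalf n)) + 1) := by
  intro Y hY
  simp only [ballBoundary, mem_filter] at hY
  obtain ⟨hYB, hYM, X, hXM, hXY⟩ := hY
  have hlow : (M.sup fun X => #(X ∩ firstHalf n)) ≤ #(Y ∩ firstHalf n) :=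
    Finset.sup_le fun X' hX' => hM X' hX' Y (mem_sdiff.mpr ⟨hYB, hYM⟩)
  have hup : #(Y ∩ firstHalf n) ≤ (M.sup fun X => #(X ∩ firstHalf n)) + 1 :=
    (card_inter_le_card_inter_add_card_symmDiff X Y _).trans
      (by rw [hXY]; exact Nat.add_le_add_right (le_sup (f := fun X => #(X ∩ firstHalf n)) hXM) 1)
  simp only [ballFiber, mem_union, mem_filter]
  rcases hlow.eq_or_lt with h | h
  · exact Or.inl ⟨hYB, h.symm⟩
  · exact Or.inr ⟨hYB, by omega⟩

end Fibers

theorem iso_ball_sharp_general (ε : ℝ) (hε0 : 0 < ε) :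
    ∃ C : ℝ, 0 < C ∧ ∀ n R : ℕ, ε * n ≤ R → 2 * R ≤ n →
      ∀ α : ℝ, ε < α → α < 1 - ε →
        ∃ M : Finset (Finset (Fin n)), M ⊆ hamBall n R ∧
          M.card = ⌊α * ((hamBall n R).card : ℝ)⌋₊ ∧
          ((ballBoundary n R M).card : ℝ) ≤
            C / Real.sqrt n * min (M.card : ℝ) (((hamBall n R \ M).card : ℝ)) := by
  obtain ⟨C, hC, hfiber⟩ := exists_card_ballFiber_le hε0
  refine ⟨4 * C / ε, by positivity, fun n R hR hRn α hα hα' => ?_⟩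
  set B := hamBall n R
  have hB : (1 : ℝ) ≤ #B := by exact_mod_cast card_pos.mpr ⟨∅, by simp [B, hamBall]⟩
  have hNB : ⌊α * (#B : ℝ)⌋₊ < #B := (Nat.floor_lt (by nlinarith)).mpr (by nlinarith)
  obtain ⟨M, hMB, hM, hsep⟩ :=
    exists_subset_card_eq_forall_le B (fun X => #(X ∩ firstHalf n)) hNB.le
  refine ⟨M, hMB, hM, ?_⟩
  rcases Nat.eq_zero_or_pos ⌊α * (#B : ℝ)⌋₊ with hN | hN
  · simp [card_eq_zero.mp (hM.trans hN), ballBoundary]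
  have hn : 0 < n := pos_of_one_lt_card (by omega : 1 < #B)
  have hmin : ε / 2 * #B ≤ min (#M : ℝ) #(B \ M) := by
    rw [card_sdiff_of_subset hMB, Nat.cast_sub (card_le_card hMB), hM]
    exact half_mul_le_min_floor hε0.le (by positivity) hα hα' hN
  have hbd := card_le_card (ballBoundary_subset_ballFiber_union hsep)
  set t := M.sup fun X => #(X ∩ firstHalf n)
  calc (#(ballBoundary n R M) : ℝ) ≤ #(ballFiber n R t) + #(ballFiber n R (t + 1)) := by
        exact_mod_cast hbd.trans (card_union_le _ _)
    _ ≤ 2 * (C / √n * #B) := by linarith [hfiber n R t hn hR hRn, hfiber n R (t + 1) hn hR hRn]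
    _ = 4 * C / ε / √n * (ε / 2 * #B) := by field_simp; ring
    _ ≤ 4 * C / ε / √n * min (#M : ℝ) #(B \ M) := by gcongr

/-- Sharpness of the isoperimetric inequality for Hamming balls: for every `ε ∈ (0,1/2)`
there is `C = C(ε) > 0` such that for all `n, R` with `εn ≤ R ≤ n/2` and every
`α ∈ (ε, 1−ε)`, some `M ⊆ B_n(R)` with `|M| = ⌊α|B_n(R)|⌋` has
`|∂_{B_n(R)} M| ≤ (C/√n) · min(|M|, |B_n(R) \ M|)`. -/
theorem iso_ball_sharp (ε : ℝ) (hε0 : 0 < ε) (hε1 : ε < 1/2) :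
    ∃ C : ℝ, 0 < C ∧ ∀ n R : ℕ, ε * n ≤ R → 2 * R ≤ n →
      ∀ α : ℝ, ε < α → α < 1 - ε →
        ∃ M : Finset (Finset (Fin n)), M ⊆ hamBall n R ∧
          M.card = ⌊α * ((hamBall n R).card : ℝ)⌋₊ ∧
          ((ballBoundary n R M).card : ℝ) ≤
            C / Real.sqrt n * min (M.card : ℝ) (((hamBall n R \ M).card : ℝ)) :=
  iso_ball_sharp_general ε hε0
end

section
/- For every ε ∈ (0, 1/2) there exists a constant C = C(ε) > 0 such that for all n, r, s ∈ ℕ with n = r + s and r, s ≥ εn, and for every α ∈ [0,1], there exists C' ⊆ S_n(r) with |C'| = ⌊α·C(n,r)⌋ whose vertex boundary in the hypercube Q_n satisfies |∂_n C'| ≤ (r/(s+1) + s/(r+1))·|C'| + (C/√n)·C(n,r). -/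
set_option maxHeartbeats 2000000

open Finset

/-- vertex boundary of `A` in the hypercube `Q_n`: subsets not in `A` that are adjacent
(symmetric difference of size one) to a member of `A` -/
def cubeBoundary (n : ℕ) (A : Finset (Finset (Fin n))) : Finset (Finset (Fin n)) :=
  Finset.univ.filter (fun Y => Y ∉ A ∧ ∃ X ∈ A, (symmDiff X Y).card = 1)

/-- lower shadow of `A ⊆ S_n(r)` -/
def lowerShadow (n r : ℕ) (A : Finset (Finset (Fin n))) : Finset (Finset (Fin n)) :=
  cubeBoundary n A ∩ sphere n (r - 1)

/-- upper shadow of `A ⊆ S_n(r)` -/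
def upperShadow (n r : ℕ) (A : Finset (Finset (Fin n))) : Finset (Finset (Fin n)) :=
  cubeBoundary n A ∩ sphere n (r + 1)

namespace LESharp

/- ### Elementary binomial estimates -/

lemma central_succ (t : ℕ) :
    (t+1)^2 * (2*(t+1)).choose (t+1) = (2*t+2) * (2*t+1) * (2*t).choose t := by
  have h1 := Nat.add_one_mul_choose_eq (2*t+1) t
  have h2 := Nat.add_one_mul_choose_eq (2*t) t
  have h3 := Nat.choose_symm_half t
  have e : 2*(t+1) = (2*t+1)+1 := by ring
  rw [e]
  rw [h3] at h2
  nlinarith [h1, h2]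

lemma central_sq_le (t : ℕ) : (2*t+1) * ((2*t).choose t)^2 ≤ 16^t := by
  induction t with
  | zero => simp
  | succ t ih =>
      have hrec := central_succ t
      have hpos : 0 < (t+1)^4 := by positivity
      refine Nat.le_of_mul_le_mul_left ?_ hpos
      have key : (t+1)^4 * ((2*(t+1)+1) * ((2*(t+1)).choose (t+1))^2)
          = (2*t+3) * ((2*t+2)*(2*t+1))^2 * ((2*t).choose t)^2 := by
        calc (t+1)^4 * ((2*(t+1)+1) * ((2*(t+1)).choose (t+1))^2)
            = (2*(t+1)+1) * ((t+1)^2 * (2*(t+1)).choose (t+1))^2 := by ring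
          _ = (2*(t+1)+1) * ((2*t+2) * (2*t+1) * (2*t).choose t)^2 := by rw [hrec]
          _ = (2*t+3) * ((2*t+2)*(2*t+1))^2 * ((2*t).choose t)^2 := by ring
      rw [key]
      have h2 : (2*t+3) * ((2*t+2)*(2*t+1))^2 * ((2*t).choose t)^2
          ≤ (2*t+2)^2 * (2*t+2)^2 * ((2*t+1) * ((2*t).choose t)^2) := by
        nlinarith [sq_nonneg ((2*t).choose t)]
      refine h2.trans ?_
      have h3 : (2*t+2)^2 * (2*t+2)^2 * ((2*t+1) * ((2*t).choose t)^2)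
          ≤ (2*t+2)^2 * (2*t+2)^2 * 16^t := Nat.mul_le_mul_left _ ih
      refine h3.trans ?_
      have e1 : (2*t+2)^2 * (2*t+2)^2 = 16 * (t+1)^4 := by ring
      rw [e1]
      have e2 : 16 * (t+1)^4 * 16^t = (t+1)^4 * 16^(t+1) := by ring
      rw [e2]

lemma central_sq_ge (t : ℕ) (ht : 1 ≤ t) : 16^t ≤ 4*t * ((2*t).choose t)^2 := by
  induction t with
  | zero => omega
  | succ t ih =>
      rcases Nat.eq_zero_or_pos t with h0 | hpos
      · subst h0; norm_num
      · have iht := ih hpos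
        have hrec := central_succ t
        have hp : 0 < (t+1)^4 := by positivity
        refine Nat.le_of_mul_le_mul_left ?_ hp
        have key : (t+1)^4 * (4*(t+1) * ((2*(t+1)).choose (t+1))^2)
            = 4*(t+1) * ((2*t+2)*(2*t+1))^2 * ((2*t).choose t)^2 := by
          calc (t+1)^4 * (4*(t+1) * ((2*(t+1)).choose (t+1))^2)
              = 4*(t+1) * ((t+1)^2 * (2*(t+1)).choose (t+1))^2 := by ring
            _ = 4*(t+1) * ((2*t+2) * (2*t+1) * (2*t).choose t)^2 := by rw [hrec]
            _ = 4*(t+1) * ((2*t+2)*(2*t+1))^2 * ((2*t).choose t)^2 := by ring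
        rw [key]
        have h1 : (t+1)^4 * 16^(t+1) ≤ (t+1)^4 * 16 * (4*t*((2*t).choose t)^2) := by
          calc (t+1)^4 * 16^(t+1) = (t+1)^4 * 16 * 16^t := by ring
          _ ≤ (t+1)^4 * 16 * (4*t*((2*t).choose t)^2) := Nat.mul_le_mul_left _ iht
        refine h1.trans ?_
        nlinarith [sq_nonneg ((2*t).choose t)]

/-- (A) : uniform upper bound on squared binomials -/
lemma choose_sq_le (m k : ℕ) : (m+1) * (m.choose k)^2 ≤ 2 * 4^m := by
  have hmid : m.choose k ≤ m.choose (m/2) := Nat.choose_le_middle k m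
  have h : (m+1) * (m.choose k)^2 ≤ (m+1) * (m.choose (m/2))^2 :=
    Nat.mul_le_mul_left _ (Nat.pow_le_pow_left hmid 2)
  refine h.trans ?_
  rcases Nat.even_or_odd m with ⟨t, ht⟩ | ⟨t, ht⟩
  · subst ht
    have e : t + t = 2*t := by ring
    rw [e]
    have hd : 2*t/2 = t := by omega
    rw [hd]
    have := central_sq_le t
    have h16 : (16:ℕ)^t ≤ 4^(2*t) := by
      rw [show (16:ℕ) = 4^2 by norm_num, ← pow_mul]
    omega
  · subst ht
    have hd : (2*t+1)/2 = t := by omega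
    rw [hd]
    have h2 := Nat.add_one_mul_choose_eq (2*t) t
    rw [Nat.choose_symm_half t] at h2
    have hpos : 0 < (t+1)^2 := by positivity
    refine Nat.le_of_mul_le_mul_left ?_ hpos
    have key : (t+1)^2 * ((2*t+1+1) * ((2*t+1).choose t)^2)
        = (2*t+2) * ((2*t+1) * (2*t).choose t)^2 := by
      calc (t+1)^2 * ((2*t+1+1) * ((2*t+1).choose t)^2)
          = (2*t+2) * ((2*t+1).choose t * (t+1))^2 := by ring
        _ = (2*t+2) * ((2*t+1) * (2*t).choose t)^2 := by rw [← h2]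
    rw [key]
    have h1 : (2*t+2) * ((2*t+1) * (2*t).choose t)^2
        = (2*t+2) * (2*t+1) * ((2*t+1) * ((2*t).choose t)^2) := by ring
    rw [h1]
    have h3 : (2*t+2) * (2*t+1) * ((2*t+1) * ((2*t).choose t)^2)
        ≤ (2*t+2) * (2*t+1) * 16^t := Nat.mul_le_mul_left _ (central_sq_le t)
    refine h3.trans ?_
    have h4 : (16:ℕ)^t * 4 = 4^(2*t+1) := by
      rw [show (16:ℕ) = 4^2 by norm_num, ← pow_mul]
      rw [← pow_succ]
    calc (2*t+2) * (2*t+1) * 16^t ≤ (t+1)^2 * 2 * (16^t * 4) := by nlinarith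
      _ = (t+1)^2 * (2 * 4^(2*t+1)) := by rw [h4]; ring

/-- (B) : lower bound on the central binomial coefficient -/
lemma pow_le_central (n : ℕ) (hn : 1 ≤ n) : 4^n ≤ 8*n * (n.choose (n/2))^2 := by
  rcases Nat.even_or_odd n with ⟨t, ht⟩ | ⟨t, ht⟩
  · subst ht
    have e : t + t = 2*t := by ring
    rw [e] at hn ⊢
    have hd : 2*t/2 = t := by omega
    rw [hd]
    have := central_sq_ge t (by omega)
    have h16 : (4:ℕ)^(2*t) = 16^t := by
      rw [show (16:ℕ) = 4^2 by norm_num, ← pow_mul]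
    rw [h16]
    nlinarith [sq_nonneg ((2*t).choose t)]
  · subst ht
    have hd : (2*t+1)/2 = t := by omega
    rw [hd]
    rcases Nat.eq_zero_or_pos t with h0 | hpos
    · subst h0; norm_num
    · have hge := central_sq_ge t hpos
      have hmono : (2*t).choose t ≤ (2*t+1).choose t :=
        Nat.choose_le_choose t (by omega)
      have h16 : (4:ℕ)^(2*t+1) = 4 * 16^t := by
        rw [show (16:ℕ) = 4^2 by norm_num, ← pow_mul, pow_succ]; ring
      rw [h16]
      have h5 : 4 * 16^t ≤ 4 * (4*t*((2*t).choose t)^2) := Nat.mul_le_mul_left _ hge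
      refine h5.trans ?_
      have hsq : ((2*t).choose t)^2 ≤ ((2*t+1).choose t)^2 := Nat.pow_le_pow_left hmono 2
      nlinarith [hsq]

/- ### Binomial identities -/

lemma chainId (N k j : ℕ) (hj : j ≤ k) (hk : k ≤ N) :
    N.choose k * k.choose j = N.choose j * (N-j).choose (k-j) := by
  have hjN : j ≤ N := hj.trans hk
  have h1 := Nat.choose_mul_factorial_mul_factorial hj
  have h2 := Nat.choose_mul_factorial_mul_factorial hk
  have h3 := Nat.choose_mul_factorial_mul_factorial hjN
  have h4 := Nat.choose_mul_factorial_mul_factorial (show k - j ≤ N - j by omega)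
  have h5 : N - j - (k - j) = N - k := by omega
  rw [h5] at h4
  have hpos : 0 < (j).factorial * (k-j).factorial * (N-k).factorial := by positivity
  refine Nat.eq_of_mul_eq_mul_right hpos ?_
  calc N.choose k * k.choose j * ((j).factorial * (k-j).factorial * (N-k).factorial)
      = N.choose k * (k.choose j * (j).factorial * (k-j).factorial) * (N-k).factorial := by
        ring
    _ = N.choose k * (k).factorial * (N-k).factorial := by rw [h1]
    _ = (N).factorial := h2
    _ = N.choose j * (j).factorial * (N-j).factorial := h3.symm
    _ = N.choose j * (j).factorial
        * ((N-j).choose (k-j) * (k-j).factorial * (N-k).factorial) := by rw [h4]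
    _ = N.choose j * (N-j).choose (k-j)
        * ((j).factorial * (k-j).factorial * (N-k).factorial) := by ring

lemma ccId (N A B : ℕ) (h : A + B ≤ N) :
    N.choose A * (N-A).choose B = N.choose B * (N-B).choose A := by
  have hA : A ≤ N := by omega
  have hB : B ≤ N := by omega
  have hBA : B ≤ N - A := by omega
  have hAB : A ≤ N - B := by omega
  have h1 := Nat.choose_mul_factorial_mul_factorial hA
  have h2 := Nat.choose_mul_factorial_mul_factorial hB
  have h3 := Nat.choose_mul_factorial_mul_factorial hBA
  have h4 := Nat.choose_mul_factorial_mul_factorial hAB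
  have e2 : N - B - A = N - A - B := by omega
  rw [e2] at h4
  have hpos : 0 < (A).factorial * (B).factorial * (N-A-B).factorial := by positivity
  refine Nat.eq_of_mul_eq_mul_right hpos ?_
  calc N.choose A * (N-A).choose B * ((A).factorial * (B).factorial * (N-A-B).factorial)
      = N.choose A * (A).factorial
        * ((N-A).choose B * (B).factorial * (N-A-B).factorial) := by ring
    _ = N.choose A * (A).factorial * (N-A).factorial := by rw [h3]
    _ = (N).factorial := h1
    _ = N.choose B * (B).factorial * (N-B).factorial := h2.symm
    _ = N.choose B * (B).factorial
        * ((N-B).choose A * (A).factorial * (N-A-B).factorial) := by rw [h4]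
    _ = N.choose B * (N-B).choose A
        * ((A).factorial * (B).factorial * (N-A-B).factorial) := by ring

/-- guarded sliced binomial coefficient -/
def F (a c k j : ℕ) : ℕ := if j ≤ k then a.choose j * c.choose (k-j) else 0

lemma symIneq (n k j a' : ℕ) (ha : a' ≤ n) (hk : k ≤ n) :
    F a' (n - a') k j * n.choose a' ≤ k.choose j * (n-k).choose (a'-j) * n.choose k := by
  unfold F
  split
  case isFalse => simp
  case isTrue hjk =>
    by_cases hja : j ≤ a'
    · by_cases hkj : k - j ≤ n - a'
      · have e1 : n.choose a' * a'.choose j = n.choose j * (n-j).choose (a'-j) :=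
          chainId n a' j hja ha
        have e2 : n.choose k * k.choose j = n.choose j * (n-j).choose (k-j) :=
          chainId n k j hjk hk
        have hside : (a'-j) + (k-j) ≤ n - j := by omega
        have e3 := ccId (n-j) (a'-j) (k-j) hside
        have f1 : n - j - (a'-j) = n - a' := by omega
        have f2 : n - j - (k-j) = n - k := by omega
        rw [f1, f2] at e3
        have key : a'.choose j * (n - a').choose (k - j) * n.choose a'
            = k.choose j * (n-k).choose (a'-j) * n.choose k := by
          calc a'.choose j * (n - a').choose (k - j) * n.choose a'
              = (n.choose a' * a'.choose j) * (n - a').choose (k - j) := by ring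
            _ = (n.choose j * (n-j).choose (a'-j)) * (n - a').choose (k - j) := by rw [e1]
            _ = n.choose j * ((n-j).choose (a'-j) * (n - a').choose (k - j)) := by ring
            _ = n.choose j * ((n-j).choose (k-j) * (n-k).choose (a'-j)) := by rw [e3]
            _ = (n.choose j * (n-j).choose (k-j)) * (n-k).choose (a'-j) := by ring
            _ = (n.choose k * k.choose j) * (n-k).choose (a'-j) := by rw [← e2]
            _ = k.choose j * (n-k).choose (a'-j) * n.choose k := by ring
        exact le_of_eq key
      · have hz : (n - a').choose (k - j) = 0 := Nat.choose_eq_zero_of_lt (by omega)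
        simp [hz]
    · have hz : a'.choose j = 0 := Nat.choose_eq_zero_of_lt (by omega)
      simp [hz]

/- ### The counting identity -/

lemma step (a c k b : ℕ) (hk : 1 ≤ k) (hkac : k ≤ a + c) :
    (a + c - k + 1) * F a c (k-1) (b+1) + (a - b) * F a c (k-1) b
      = k * F a c k (b+1) + (a - (b+1)) * F a c (k-1) (b+1) := by
  by_cases h1 : b + 1 ≤ k - 1
  · by_cases h2 : b + 1 ≤ a
    · have hg1 : F a c (k-1) (b+1) = a.choose (b+1) * c.choose (k-b-2) := by
        unfold F; rw [if_pos h1]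
        have e : k - 1 - (b+1) = k - b - 2 := by omega
        rw [e]
      have hg2 : F a c (k-1) b = a.choose b * c.choose (k-b-1) := by
        unfold F; rw [if_pos (by omega : b ≤ k - 1)]
        have e : k - 1 - b = k - b - 1 := by omega
        rw [e]
      have hg3 : F a c k (b+1) = a.choose (b+1) * c.choose (k-b-1) := by
        unfold F; rw [if_pos (by omega : b+1 ≤ k)]
        have e : k - (b+1) = k - b - 1 := by omega
        rw [e]
      rw [hg1, hg2, hg3]
      by_cases h3 : k - b - 1 ≤ c
      · have e1 : a.choose b * (a - b) = a.choose (b+1) * (b+1) :=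
          (Nat.choose_succ_right_eq a b).symm
        have e2 : c.choose (k-b-1) * (k-b-1) = c.choose (k-b-2) * (c - (k-b-2)) := by
          have h' := Nat.choose_succ_right_eq c (k-b-2)
          have e : k - b - 2 + 1 = k - b - 1 := by omega
          rw [e] at h'; exact h'
        have ha2 : a + c - k + 1 = (a - (b+1)) + (c - (k-b-2)) := by omega
        have ha1 : a - b = (a - (b+1)) + 1 := by omega
        have ha3 : (k-b-1) + (b+1) = k := by omega
        calc (a+c-k+1) * (a.choose (b+1) * c.choose (k-b-2))
              + (a-b) * (a.choose b * c.choose (k-b-1))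
            = (a-(b+1)) * (a.choose (b+1) * c.choose (k-b-2))
              + a.choose (b+1) * (c.choose (k-b-2) * (c-(k-b-2)))
              + (a.choose b * (a-b)) * c.choose (k-b-1) := by rw [ha2, ha1]; ring
          _ = (a-(b+1)) * (a.choose (b+1) * c.choose (k-b-2))
              + a.choose (b+1) * (c.choose (k-b-1) * (k-b-1))
              + (a.choose (b+1) * (b+1)) * c.choose (k-b-1) := by rw [e1, e2]
          _ = ((k-b-1)+(b+1)) * (a.choose (b+1) * c.choose (k-b-1))
              + (a-(b+1)) * (a.choose (b+1) * c.choose (k-b-2)) := by ring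
          _ = k * (a.choose (b+1) * c.choose (k-b-1))
              + (a-(b+1)) * (a.choose (b+1) * c.choose (k-b-2)) := by rw [ha3]
      · have hS0 : c.choose (k-b-1) = 0 := Nat.choose_eq_zero_of_lt (by omega)
        rw [hS0]
        by_cases h4 : k - b - 2 ≤ c
        · have h4' : k - b - 2 = c := by omega
          have hR1 : c.choose (k-b-2) = 1 := by rw [h4']; exact Nat.choose_self c
          rw [hR1]
          have e : a + c - k + 1 = a - (b+1) := by omega
          rw [e]; ring
        · have hR0 : c.choose (k-b-2) = 0 := Nat.choose_eq_zero_of_lt (by omega)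
          rw [hR0]; ring
    · have hz : a.choose (b+1) = 0 := Nat.choose_eq_zero_of_lt (by omega)
      have hF1 : F a c (k-1) (b+1) = 0 := by unfold F; rw [if_pos h1, hz]; ring
      have hF3 : F a c k (b+1) = 0 := by
        unfold F; rw [if_pos (by omega : b+1 ≤ k), hz]; ring
      rw [hF1, hF3]
      rcases Nat.lt_or_ge a b with hab | hab
      · have hz2 : a.choose b = 0 := Nat.choose_eq_zero_of_lt hab
        have hFb : F a c (k-1) b = 0 := by
          unfold F; split
          · rw [hz2]; ring
          · rfl
        rw [hFb]; ring
      · have e : a - b = 0 := by omega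
        rw [e]; ring
  · have hF1 : F a c (k-1) (b+1) = 0 := by unfold F; rw [if_neg h1]
    rw [hF1]
    by_cases h5 : b = k - 1
    · subst h5
      have hFb : F a c (k-1) (k-1) = a.choose (k-1) := by
        unfold F; rw [if_pos le_rfl]
        simp
      have hFk : F a c k (k-1+1) = a.choose k := by
        unfold F
        rw [if_pos (by omega : k-1+1 ≤ k)]
        have e : k - (k-1+1) = 0 := by omega
        have e' : k - 1 + 1 = k := by omega
        rw [e, e']; simp
      rw [hFb, hFk]
      have e1 := Nat.choose_succ_right_eq a (k-1)
      have e : k - 1 + 1 = k := by omega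
      rw [e] at e1
      calc (a+c-k+1) * 0 + (a - (k-1)) * a.choose (k-1)
          = a.choose (k-1) * (a - (k-1)) := by ring
        _ = a.choose k * k := e1.symm
        _ = k * a.choose k + (a - (k-1+1)) * 0 := by ring
    · have hFb : F a c (k-1) b = 0 := by unfold F; rw [if_neg (by omega)]
      have hFk : F a c k (b+1) = 0 := by unfold F; rw [if_neg (by omega)]
      rw [hFb, hFk]; ring

lemma gen (a c k : ℕ) (hk : 1 ≤ k) (hkac : k ≤ a + c) (b : ℕ) :
    (a + c - k + 1) * (∑ j ∈ range (b+1), F a c (k-1) j)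
      = k * (∑ j ∈ range (b+1), F a c k j) + (a - b) * F a c (k-1) b := by
  induction b with
  | zero =>
      simp only [Nat.zero_add, range_one, sum_singleton]
      have hF0 : F a c (k-1) 0 = c.choose (k-1) := by
        unfold F; rw [if_pos (Nat.zero_le _)]; simp
      have hFk0 : F a c k 0 = c.choose k := by
        unfold F; rw [if_pos (Nat.zero_le _)]; simp
      rw [hF0, hFk0]
      by_cases h1 : k ≤ c
      · have e : a + c - k + 1 = a + (c - (k-1)) := by omega
        rw [e]
        have e2 := Nat.choose_succ_right_eq c (k-1)
        have h' : k - 1 + 1 = k := by omega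
        rw [h'] at e2
        calc (a + (c - (k-1))) * c.choose (k-1)
            = c.choose (k-1) * (c - (k-1)) + a * c.choose (k-1) := by ring
          _ = c.choose k * k + a * c.choose (k-1) := by rw [← e2]
          _ = k * c.choose k + (a - 0) * c.choose (k-1) := by
              rw [Nat.sub_zero]; ring
      · by_cases h2 : k - 1 ≤ c
        · have h2' : k - 1 = c := by omega
          have hc1 : c.choose (k-1) = 1 := by rw [h2']; exact Nat.choose_self c
          have hc0 : c.choose k = 0 := Nat.choose_eq_zero_of_lt (by omega)
          rw [hc1, hc0]
          have e : a + c - k + 1 = a := by omega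
          rw [e]; omega
        · have hc1 : c.choose (k-1) = 0 := Nat.choose_eq_zero_of_lt (by omega)
          have hc0 : c.choose k = 0 := Nat.choose_eq_zero_of_lt (by omega)
          rw [hc1, hc0]; ring
  | succ b ih =>
      rw [sum_range_succ, sum_range_succ (f := fun j => F a c k j)]
      have st := step a c k b hk hkac
      calc (a + c - k + 1) * (∑ j ∈ range (b+1), F a c (k-1) j + F a c (k-1) (b+1))
          = (a + c - k + 1) * (∑ j ∈ range (b+1), F a c (k-1) j)
            + (a + c - k + 1) * F a c (k-1) (b+1) := by ring
        _ = k * (∑ j ∈ range (b+1), F a c k j) + (a - b) * F a c (k-1) b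
            + (a + c - k + 1) * F a c (k-1) (b+1) := by rw [ih]
        _ = k * (∑ j ∈ range (b+1), F a c k j)
            + ((a + c - k + 1) * F a c (k-1) (b+1) + (a - b) * F a c (k-1) b) := by ring
        _ = k * (∑ j ∈ range (b+1), F a c k j)
            + (k * F a c k (b+1) + (a - (b+1)) * F a c (k-1) (b+1)) := by rw [st]
        _ = k * (∑ j ∈ range (b+1), F a c k j + F a c k (b+1))
            + (a - (b+1)) * F a c (k-1) (b+1) := by ring

/- ### Finset counting lemmas -/

lemma sphere_card (n r : ℕ) : (sphere n r).card = n.choose r := by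
  unfold sphere
  rw [← Finset.powerset_univ, ← Finset.powersetCard_eq_filter, Finset.card_powersetCard,
    Finset.card_univ, Fintype.card_fin]

lemma slice_card (n : ℕ) (A : Finset (Fin n)) (k j : ℕ) :
    (((sphere n k)).filter (fun X => (X ∩ A).card = j)).card
      = F A.card Aᶜ.card k j := by
  by_cases hjk : j ≤ k
  · unfold F
    rw [if_pos hjk]
    rw [← Finset.card_powersetCard, ← Finset.card_powersetCard, ← Finset.card_product]
    apply Finset.card_bij' (fun X _ => (X ∩ A, X \ A))
      (fun p _ => p.1 ∪ p.2)
    · intro X hX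
      simp only [Finset.mem_filter, sphere, Finset.mem_univ, true_and] at hX
      obtain ⟨hcard, hinter⟩ := hX
      simp only [Finset.mem_product, Finset.mem_powersetCard]
      refine ⟨⟨Finset.inter_subset_right, hinter⟩, ⟨?_, ?_⟩⟩
      · intro x hx
        simp only [Finset.mem_sdiff] at hx
        simp only [Finset.mem_compl]
        exact hx.2
      · have := Finset.card_sdiff_add_card_inter X A
        omega
    · intro p hp
      simp only [Finset.mem_product, Finset.mem_powersetCard] at hp
      obtain ⟨⟨hp1, hc1⟩, hp2, hc2⟩ := hp
      have hdisj : Disjoint p.1 p.2 := by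
        refine Finset.disjoint_left.mpr ?_
        intro x hx1 hx2
        have := hp2 hx2
        simp only [Finset.mem_compl] at this
        exact this (hp1 hx1)
      simp only [sphere, Finset.mem_filter, Finset.mem_univ, true_and]
      constructor
      · rw [Finset.card_union_of_disjoint hdisj, hc1, hc2]; omega
      · have e : (p.1 ∪ p.2) ∩ A = p.1 := by
          ext x
          simp only [Finset.mem_inter, Finset.mem_union]
          constructor
          · rintro ⟨hx | hx, hA⟩
            · exact hx
            · exact absurd hA (by simpa using hp2 hx)
          · intro hx; exact ⟨Or.inl hx, hp1 hx⟩
        rw [e, hc1]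
    · intro X hX
      rw [Finset.union_comm]
      exact Finset.sdiff_union_inter X A
    · intro p hp
      simp only [Finset.mem_product, Finset.mem_powersetCard] at hp
      obtain ⟨⟨hp1, hc1⟩, hp2, hc2⟩ := hp
      have h1 : (p.1 ∪ p.2) ∩ A = p.1 := by
        ext x
        simp only [Finset.mem_inter, Finset.mem_union]
        constructor
        · rintro ⟨hx | hx, hA⟩
          · exact hx
          · exact absurd hA (by simpa using hp2 hx)
        · intro hx; exact ⟨Or.inl hx, hp1 hx⟩
      have h2 : (p.1 ∪ p.2) \ A = p.2 := by
        ext x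
        simp only [Finset.mem_sdiff, Finset.mem_union]
        constructor
        · rintro ⟨hx | hx, hA⟩
          · exact absurd (hp1 hx) hA
          · exact hx
        · intro hx
          have := hp2 hx
          simp only [Finset.mem_compl] at this
          exact ⟨Or.inr hx, this⟩
      rw [h1, h2]
  · unfold F
    rw [if_neg hjk]
    rw [Finset.card_eq_zero]
    rw [Finset.filter_eq_empty_iff]
    intro X hX
    simp only [sphere, Finset.mem_filter, Finset.mem_univ, true_and] at hX
    intro hcon
    have : (X ∩ A).card ≤ X.card := Finset.card_le_card Finset.inter_subset_left
    omega

lemma cnt (n : ℕ) (A : Finset (Fin n)) (k t : ℕ) :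
    ((sphere n k).filter (fun Y => (Y ∩ A).card < t)).card
      = ∑ j ∈ range t, F A.card Aᶜ.card k j := by
  induction t with
  | zero => simp
  | succ t ih =>
      rw [sum_range_succ, ← ih, ← slice_card n A k t]
      rw [← Finset.card_union_of_disjoint]
      · congr 1
        rw [← Finset.filter_or]
        apply Finset.filter_congr
        intro Y _
        constructor
        · intro h; omega
        · intro h; omega
      · rw [Finset.disjoint_filter]
        intro Y _ h1 h2
        omega

lemma initseg_card (n a : ℕ) (ha : a ≤ n) :
    ((Finset.univ : Finset (Fin n)).filter (fun i => i.val < a)).card = a := by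
  rcases eq_or_lt_of_le ha with h | h
  · subst h
    have e : ((Finset.univ : Finset (Fin a)).filter (fun i => i.val < a)) = Finset.univ := by
      apply Finset.filter_true_of_mem
      intro i _
      exact i.isLt
    rw [e, Finset.card_univ, Fintype.card_fin]
  · have e : ((Finset.univ : Finset (Fin n)).filter (fun i => i.val < a))
        = Finset.Iio (⟨a, h⟩ : Fin n) := by
      ext i
      simp [Finset.mem_Iio, Fin.lt_def]
    rw [e, Fin.card_Iio]

/- ### The local limit estimate -/

lemma maxF_nat (n k j : ℕ) (hn : 1 ≤ n) (hk : k ≤ n) :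
    ((k+1) * ((n-k)+1)) * (F (n/2) (n - n/2) k j)^2 ≤ 32 * n * (n.choose k)^2 := by
  set X := F (n/2) (n - n/2) k j with hX
  set CB := n.choose (n/2) with hCB
  set T1 := k.choose j with hT1
  set T2 := (n-k).choose (n/2 - j) with hT2
  set CK := n.choose k with hCK
  have hsym : X * CB ≤ T1 * T2 * CK := symIneq n k j (n/2) (by omega) hk
  have hCBpos : 0 < CB := Nat.choose_pos (by omega)
  have hsq : (X * CB)^2 ≤ T1^2 * T2^2 * CK^2 := by
    calc (X * CB)^2 ≤ (T1 * T2 * CK)^2 := Nat.pow_le_pow_left hsym 2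
      _ = T1^2 * T2^2 * CK^2 := by ring
  have hA1 : (k+1) * T1^2 ≤ 2 * 4^k := choose_sq_le k j
  have hA2 : ((n-k)+1) * T2^2 ≤ 2 * 4^(n-k) := choose_sq_le (n-k) (n/2 - j)
  have hB : 4^n ≤ 8*n * CB^2 := pow_le_central n hn
  have hpow : (4:ℕ)^k * 4^(n-k) = 4^n := by
    rw [← pow_add]; congr 1; omega
  have step1 : ((k+1) * ((n-k)+1)) * (X*CB)^2
      ≤ ((k+1) * T1^2) * (((n-k)+1) * T2^2) * CK^2 := by
    calc ((k+1) * ((n-k)+1)) * (X*CB)^2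
        ≤ ((k+1) * ((n-k)+1)) * (T1^2 * T2^2 * CK^2) := Nat.mul_le_mul_left _ hsq
      _ = ((k+1) * T1^2) * (((n-k)+1) * T2^2) * CK^2 := by ring
  have step2 : ((k+1) * T1^2) * (((n-k)+1) * T2^2) * CK^2
      ≤ (2 * 4^k) * (2 * 4^(n-k)) * CK^2 :=
    Nat.mul_le_mul_right _ (Nat.mul_le_mul hA1 hA2)
  have step3 : (2 * 4^k) * (2 * 4^(n-k)) * CK^2 = 4 * 4^n * CK^2 := by
    rw [show (2 * 4^k) * (2 * 4^(n-k)) = 4 * (4^k * 4^(n-k)) by ring, hpow]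
  have step4 : 4 * 4^n * CK^2 ≤ 4 * (8*n*CB^2) * CK^2 :=
    Nat.mul_le_mul_right _ (Nat.mul_le_mul_left _ hB)
  have hfin : ((k+1) * ((n-k)+1)) * (X*CB)^2 ≤ 32*n*CB^2*CK^2 := by
    calc ((k+1) * ((n-k)+1)) * (X*CB)^2
        ≤ (2 * 4^k) * (2 * 4^(n-k)) * CK^2 := (step1.trans step2)
      _ = 4 * 4^n * CK^2 := step3
      _ ≤ 4 * (8*n*CB^2) * CK^2 := step4
      _ = 32*n*CB^2*CK^2 := by ring
  have hCB2 : 0 < CB^2 := by positivity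
  refine Nat.le_of_mul_le_mul_right ?_ hCB2
  calc ((k+1) * ((n-k)+1)) * X^2 * CB^2
      = ((k+1) * ((n-k)+1)) * (X*CB)^2 := by ring
    _ ≤ 32*n*CB^2*CK^2 := hfin
    _ = 32*n*CK^2 * CB^2 := by ring

lemma maxF_le (n k j : ℕ) (hn : 1 ≤ n) (hk : k ≤ n) (ε : ℝ) (hε : 0 < ε)
    (h1 : ε * n ≤ (k:ℝ) + 1) (h2 : ε * n ≤ ((n - k : ℕ):ℝ) + 1) :
    (F (n/2) (n - n/2) k j : ℝ) ≤ 6 / (ε * Real.sqrt n) * (n.choose k) := by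
  have hNat := maxF_nat n k j hn hk
  have hcast : (((k:ℝ)+1) * (((n-k:ℕ):ℝ)+1)) * ((F (n/2) (n - n/2) k j : ℝ))^2
      ≤ 32 * n * ((n.choose k : ℝ))^2 := by
    exact_mod_cast hNat
  set X := (F (n/2) (n - n/2) k j : ℝ) with hX
  set CK := ((n.choose k : ℝ)) with hCK
  have hXnn : 0 ≤ X := by positivity
  have hCKnn : 0 ≤ CK := by positivity
  have hnpos : (0:ℝ) < n := by exact_mod_cast hn
  have hεn : 0 < ε * n := by positivity
  have key : (ε*n) * (ε*n) * X^2 ≤ 32 * n * CK^2 := by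
    have hX2 : (0:ℝ) ≤ X^2 := sq_nonneg X
    calc (ε*n) * (ε*n) * X^2 ≤ (((k:ℝ)+1) * (((n-k:ℕ):ℝ)+1)) * X^2 := by
          apply mul_le_mul_of_nonneg_right _ hX2
          exact mul_le_mul h1 h2 (le_of_lt hεn) (by positivity)
      _ ≤ 32 * n * CK^2 := hcast
  have key2 : ε^2 * n * X^2 ≤ 32 * CK^2 := by
    have hmul : (ε^2 * n * X^2) * n ≤ (32*CK^2) * n := by nlinarith [key]
    exact le_of_mul_le_mul_right hmul hnpos
  have hsq : (X * (ε * Real.sqrt n))^2 ≤ (6 * CK)^2 := by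
    have hsqrt : (Real.sqrt n)^2 = n := Real.sq_sqrt (le_of_lt hnpos)
    have e : (X * (ε * Real.sqrt n))^2 = ε^2 * n * X^2 := by
      rw [mul_pow, mul_pow, hsqrt]; ring
    rw [e]
    nlinarith [key2, sq_nonneg CK]
  have hsnn : 0 < ε * Real.sqrt n := by
    have : 0 < Real.sqrt n := Real.sqrt_pos.mpr hnpos
    positivity
  have hle : X * (ε * Real.sqrt n) ≤ 6 * CK := by
    have h6 : (0:ℝ) ≤ 6 * CK := by positivity
    nlinarith [hsq, mul_nonneg hXnn (le_of_lt hsnn)]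
  rw [div_mul_eq_mul_div, le_div_iff₀ hsnn]
  exact hle

/-- final real-arithmetic assembly -/
lemma assemble (ε x rr ss aa M G L U Bd Φ1 Φ2 Φ3 D1 D : ℝ)
    (hε0 : 0 < ε) (hε1 : ε ≤ 1) (hx : 0 < x)
    (hrr : 0 ≤ rr) (hss : 0 ≤ ss) (haa : 0 ≤ aa)
    (hM : 0 ≤ M) (hGnn : 0 ≤ G)
    (hΦ1nn : 0 ≤ Φ1) (hΦ2nn : 0 ≤ Φ2) (hΦ3nn : 0 ≤ Φ3)
    (hDnn : 0 ≤ D) (hD1nn : 0 ≤ D1)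
    (hBd : Bd ≤ L + U)
    (hLa : (ss+1) * L ≤ rr * G + aa * Φ1)
    (hUa : (rr+1) * U ≤ ss * (G + Φ2))
    (hG : G ≤ M + Φ3)
    (hεa : ε * aa ≤ ss + 1)
    (hεr : ε * rr ≤ ss + 1)
    (hεs : ε * ss ≤ rr + 1)
    (hΦ1 : Φ1 ≤ 6/(ε*x) * D1)
    (hΦ2 : Φ2 ≤ 6/(ε*x) * D)
    (hΦ3 : Φ3 ≤ 6/(ε*x) * D)
    (hD1 : ε * D1 ≤ D) :
    Bd ≤ (rr/(ss+1) + ss/(rr+1)) * M + 100/ε^3 / x * D := by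
  have hs1 : (0:ℝ) < ss + 1 := by linarith
  have hr1 : (0:ℝ) < rr + 1 := by linarith
  have hεx : (0:ℝ) < ε * x := by positivity
  -- L bound
  have hL2 : L ≤ (rr/(ss+1)) * G + (1/ε) * Φ1 := by
    have h1 : L ≤ (rr * G + aa * Φ1)/(ss+1) := by
      rw [le_div_iff₀ hs1]; linarith [hLa]
    have h2 : (rr * G + aa * Φ1)/(ss+1)
        = (rr/(ss+1)) * G + (aa/(ss+1)) * Φ1 := by ring
    have h3 : (aa/(ss+1)) * Φ1 ≤ (1/ε) * Φ1 := by
      apply mul_le_mul_of_nonneg_right _ hΦ1nn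
      rw [div_le_div_iff₀ hs1 hε0]
      nlinarith [hεa]
    linarith [h1, h2.le, h2.ge, h3]
  -- U bound
  have hU2 : U ≤ (ss/(rr+1)) * (G + Φ2) := by
    have h1 : U ≤ (ss * (G + Φ2))/(rr+1) := by
      rw [le_div_iff₀ hr1]; linarith [hUa]
    have h2 : (ss * (G + Φ2))/(rr+1) = (ss/(rr+1)) * (G + Φ2) := by ring
    linarith [h1, h2.le]
  have hρ1 : rr/(ss+1) ≤ 1/ε := by
    rw [div_le_div_iff₀ hs1 hε0]
    nlinarith [hεr]
  have hρ2 : ss/(rr+1) ≤ 1/ε := by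
    rw [div_le_div_iff₀ hr1 hε0]
    nlinarith [hεs]
  have hρ1nn : 0 ≤ rr/(ss+1) := by positivity
  have hρ2nn : 0 ≤ ss/(rr+1) := by positivity
  -- chain
  have hchain : Bd ≤ (rr/(ss+1) + ss/(rr+1)) * M
      + (2/ε) * Φ3 + (1/ε) * Φ2 + (1/ε) * Φ1 := by
    have eU : (ss/(rr+1)) * (G + Φ2) = (ss/(rr+1))*G + (ss/(rr+1))*Φ2 := by ring
    have t1 : (rr/(ss+1)) * G ≤ (rr/(ss+1)) * M + (rr/(ss+1)) * Φ3 := by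
      have h := mul_le_mul_of_nonneg_left hG hρ1nn
      have e : (rr/(ss+1)) * (M + Φ3) = (rr/(ss+1))*M + (rr/(ss+1))*Φ3 := by ring
      linarith [h, e.le, e.ge]
    have t2 : (ss/(rr+1)) * G ≤ (ss/(rr+1)) * M + (ss/(rr+1)) * Φ3 := by
      have h := mul_le_mul_of_nonneg_left hG hρ2nn
      have e : (ss/(rr+1)) * (M + Φ3) = (ss/(rr+1))*M + (ss/(rr+1))*Φ3 := by ring
      linarith [h, e.le, e.ge]
    have c1 : (rr/(ss+1)) * Φ3 ≤ (1/ε) * Φ3 := mul_le_mul_of_nonneg_right hρ1 hΦ3nn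
    have c2 : (ss/(rr+1)) * Φ3 ≤ (1/ε) * Φ3 := mul_le_mul_of_nonneg_right hρ2 hΦ3nn
    have c3 : (ss/(rr+1)) * Φ2 ≤ (1/ε) * Φ2 := mul_le_mul_of_nonneg_right hρ2 hΦ2nn
    have e3 : (rr/(ss+1) + ss/(rr+1)) * M = (rr/(ss+1))*M + (ss/(rr+1))*M := by ring
    have e4 : (2:ℝ)/ε * Φ3 = (1/ε)*Φ3 + (1/ε)*Φ3 := by ring
    linarith [hBd, hL2, hU2, eU.le, eU.ge, t1, t2, c1, c2, c3, e3.le, e3.ge, e4.le, e4.ge]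
  -- constant computation
  have hΦ1' : Φ1 ≤ 6/(ε*x) * (D/ε) := by
    refine hΦ1.trans (mul_le_mul_of_nonneg_left ?_ (by positivity))
    rw [le_div_iff₀ hε0]
    nlinarith [hD1]
  have hconst : (2/ε) * (6/(ε*x) * D) + (1/ε) * (6/(ε*x) * D)
      + (1/ε) * (6/(ε*x) * (D/ε)) ≤ 100/ε^3 / x * D := by
    have e : (2/ε) * (6/(ε*x) * D) + (1/ε) * (6/(ε*x) * D)
        + (1/ε) * (6/(ε*x) * (D/ε)) = (18*ε + 6)/(ε^3 * x) * D := by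
      field_simp
      ring
    have e' : (100:ℝ)/ε^3 / x = 100/(ε^3 * x) := by rw [div_div]
    rw [e, e']
    apply mul_le_mul_of_nonneg_right _ hDnn
    have hc : (0:ℝ) < ε^3 * x := by positivity
    rw [div_le_div_iff₀ hc hc]
    nlinarith [hc, hε1, hε0.le]
  have i1 : (0:ℝ) ≤ 2/ε := by positivity
  have i2 : (0:ℝ) ≤ 1/ε := by positivity
  have p1 : (2/ε) * Φ3 ≤ (2/ε) * (6/(ε*x) * D) := mul_le_mul_of_nonneg_left hΦ3 i1
  have p2 : (1/ε) * Φ2 ≤ (1/ε) * (6/(ε*x) * D) := mul_le_mul_of_nonneg_left hΦ2 i2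
  have p3 : (1/ε) * Φ1 ≤ (1/ε) * (6/(ε*x) * (D/ε)) := mul_le_mul_of_nonneg_left hΦ1' i2
  linarith [hchain, hconst, p1, p2, p3]


end LESharp

open LESharp in
set_option maxHeartbeats 2000000 in
/-- Sharpness of the local expansion estimate: for every `ε ∈ (0,1/2)` there is
`C = C(ε) > 0` such that for all `n = r + s` with `r, s ≥ εn` and every `α ∈ [0,1]`,
some `C' ⊆ S_n(r)` with `|C'| = ⌊α·C(n,r)⌋` has
`|∂_n C'| ≤ (r/(s+1)+s/(r+1))·|C'| + (C/√n)·C(n,r)`. -/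
theorem local_expansion_sharp (ε : ℝ) (hε0 : 0 < ε) (hε1 : ε < 1/2) :
    ∃ C : ℝ, 0 < C ∧ ∀ n r s : ℕ, n = r + s → ε * n ≤ r → ε * n ≤ s →
      ∀ α : ℝ, 0 ≤ α → α ≤ 1 →
        ∃ C' : Finset (Finset (Fin n)), C' ⊆ sphere n r ∧
          C'.card = ⌊α * (n.choose r : ℝ)⌋₊ ∧
          ((cubeBoundary n C').card : ℝ) ≤
            ((r : ℝ) / ((s : ℝ) + 1) + (s : ℝ) / ((r : ℝ) + 1)) * C'.card +
              C / Real.sqrt n * (n.choose r) := by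
  refine ⟨100 / ε^3, by positivity, ?_⟩
  intro n r s hn hr hs α hα0 hα1
  have hεle1 : ε ≤ 1 := by linarith
  set m := ⌊α * (n.choose r : ℝ)⌋₊ with hm
  have hmle : m ≤ n.choose r := by
    have h1 : α * (n.choose r : ℝ) ≤ (n.choose r : ℝ) := by
      nlinarith [show (0:ℝ) ≤ (n.choose r : ℝ) from by positivity]
    calc m ≤ ⌊(n.choose r : ℝ)⌋₊ := Nat.floor_le_floor h1
      _ = n.choose r := Nat.floor_natCast _
  by_cases hn0 : n = 0
  · subst hn0
    have hr0 : r = 0 := by omega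
    have hs0 : s = 0 := by omega
    subst hr0; subst hs0
    have hsph : m ≤ (sphere 0 0).card := by rw [sphere_card]; exact hmle
    obtain ⟨C', hsub, hcard⟩ := Finset.exists_subset_card_eq hsph
    refine ⟨C', hsub, hcard, ?_⟩
    have hbd : (cubeBoundary 0 C') = ∅ := by
      unfold cubeBoundary
      rw [Finset.filter_eq_empty_iff]
      intro Y _
      rintro ⟨hY, X, hX, hXY⟩
      rw [Finset.eq_empty_of_isEmpty X, Finset.eq_empty_of_isEmpty Y] at hXY
      simp at hXY
    rw [hbd]
    simp [Real.sqrt_zero]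
  · -- main case
    have hn1 : 1 ≤ n := Nat.one_le_iff_ne_zero.mpr hn0
    have hnR : (0:ℝ) < n := by exact_mod_cast hn1
    have hεn : (0:ℝ) < ε * n := by positivity
    have hr1 : 1 ≤ r := by
      rcases Nat.eq_zero_or_pos r with h0 | h; · rw [h0] at hr; simp at hr; linarith
      exact h
    have hs1 : 1 ≤ s := by
      rcases Nat.eq_zero_or_pos s with h0 | h; · rw [h0] at hs; simp at hs; linarith
      exact h
    have hrn : r ≤ n := by omega
    have hr1n : r + 1 ≤ n := by omega
    set a := n/2 with ha
    set c := n - a with hc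
    have hac : a + c = n := by omega
    set A : Finset (Fin n) := Finset.univ.filter (fun i => i.val < a) with hA
    have hAcard : A.card = a := initseg_card n a (by omega)
    have hAc : Aᶜ.card = c := by
      rw [Finset.card_compl, hAcard, Fintype.card_fin]
    have hcnt : ∀ k t, ((sphere n k).filter (fun Y => (Y ∩ A).card < t)).card
        = ∑ j ∈ range t, F a c k j := by
      intro k t
      have h := cnt n A k t
      rw [hAcard, hAc] at h
      exact h
    set g : ℕ → ℕ := fun t => ∑ j ∈ range (t+1), F a c r j with hg
    have hsphfull : ∀ t, a ≤ t ∨ r ≤ t →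
        ((sphere n r).filter (fun Y => (Y ∩ A).card < t+1)) = sphere n r := by
      intro t htt
      apply Finset.filter_true_of_mem
      intro Y hY
      have h1 : (Y ∩ A).card ≤ A.card := Finset.card_le_card Finset.inter_subset_right
      have h2 : (Y ∩ A).card ≤ Y.card := Finset.card_le_card Finset.inter_subset_left
      have h3 : Y.card = r := by
        simp only [sphere, Finset.mem_filter] at hY; exact hY.2
      rw [hAcard] at h1
      omega
    have hga : g a = n.choose r := by
      rw [hg]
      simp only
      rw [← hcnt r (a+1), hsphfull a (Or.inl le_rfl), sphere_card]
    have hgr : g r = n.choose r := by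
      rw [hg]
      simp only
      rw [← hcnt r (r+1), hsphfull r (Or.inr le_rfl), sphere_card]
    have hbex : ∃ t, m ≤ g t := ⟨a, by rw [hga]; exact hmle⟩
    set b := Nat.find hbex with hb
    have hbg : m ≤ g b := Nat.find_spec hbex
    have hbmin : ∀ t, t < b → g t < m := by
      intro t ht
      have := Nat.find_min hbex ht
      omega
    have hba : b ≤ a := Nat.find_le (by rw [hga]; exact hmle)
    have hbr : b ≤ r := Nat.find_le (by rw [hgr]; exact hmle)
    set A₀ := (sphere n r).filter (fun Y => (Y ∩ A).card < b) with hA₀def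
    have hA₀ : A₀.card = ∑ j ∈ range b, F a c r j := hcnt r b
    have hA₀m : A₀.card ≤ m := by
      rcases Nat.eq_zero_or_pos b with h0 | hpos
      · rw [hA₀, h0]
        simp
      · have h1 := hbmin (b-1) (by omega)
        have h2 : g (b-1) = A₀.card := by
          rw [hA₀]
          show ∑ j ∈ range (b-1+1), F a c r j = ∑ j ∈ range b, F a c r j
          have e : b - 1 + 1 = b := by omega
          rw [e]
        exact le_of_lt (h2 ▸ h1)
    set Sb := (sphere n r).filter (fun Y => (Y ∩ A).card = b) with hSbdef
    have hSb : Sb.card = F a c r b := by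
      have h := slice_card n A r b
      rw [hAcard, hAc] at h
      exact h
    have hgb_split : g b = A₀.card + Sb.card := by
      rw [hg]
      simp only
      rw [sum_range_succ, hA₀, hSb]
    have hd : m - A₀.card ≤ Sb.card := by
      have h1 := hbg
      rw [hgb_split] at h1
      omega
    obtain ⟨E, hEsub, hEcard⟩ := Finset.exists_subset_card_eq hd
    set C' := A₀ ∪ E with hC'def
    have hdisj : Disjoint A₀ E := by
      rw [Finset.disjoint_left]
      intro x hx hxE
      have h1 := (Finset.mem_filter.mp hx).2
      have h2 := (Finset.mem_filter.mp (hEsub hxE)).2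
      omega
    have hC'sub : C' ⊆ sphere n r :=
      Finset.union_subset (Finset.filter_subset _ _)
        (hEsub.trans (Finset.filter_subset _ _))
    have hC'card : C'.card = m := by
      rw [hC'def, Finset.card_union_of_disjoint hdisj, hEcard]
      omega
    refine ⟨C', hC'sub, hC'card, ?_⟩
    have hmemC' : ∀ X ∈ C', X.card = r ∧ (X ∩ A).card ≤ b := by
      intro X hX
      rcases Finset.mem_union.mp hX with h | h
      · obtain ⟨hsph, hlt⟩ := Finset.mem_filter.mp h
        have := (Finset.mem_filter.mp hsph).2
        exact ⟨this, by omega⟩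
      · obtain ⟨hsph, heq⟩ := Finset.mem_filter.mp (hEsub h)
        have := (Finset.mem_filter.mp hsph).2
        exact ⟨this, by omega⟩
    set B₁ := (sphere n (r-1)).filter (fun Y => (Y ∩ A).card < b+1) with hB₁def
    set B₂ := (sphere n (r+1)).filter (fun Y => (Y ∩ A).card < b+2) with hB₂def
    have hbound : cubeBoundary n C' ⊆ B₁ ∪ B₂ := by
      intro Y hY
      rw [cubeBoundary, Finset.mem_filter] at hY
      obtain ⟨-, hYnot, X, hXC', hXY⟩ := hY
      obtain ⟨hXr, hXb⟩ := hmemC' X hXC'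
      obtain ⟨t, ht⟩ := Finset.card_eq_one.mp hXY
      have hY' : Y = symmDiff X {t} := by
        have h := symmDiff_symmDiff_cancel_left (a := X) (b := Y)
        rw [ht] at h
        exact h.symm
      by_cases htX : t ∈ X
      · have hYe : Y = X.erase t := by
          rw [hY']
          ext u
          simp only [Finset.mem_symmDiff, Finset.mem_singleton, Finset.mem_erase]
          constructor
          · rintro (⟨hu, hne⟩ | ⟨rfl, hno⟩)
            · exact ⟨hne, hu⟩
            · exact absurd htX hno
          · rintro ⟨hne, hu⟩
            exact Or.inl ⟨hu, hne⟩
        apply Finset.mem_union_left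
        refine Finset.mem_filter.mpr ⟨Finset.mem_filter.mpr ⟨Finset.mem_univ _, ?_⟩, ?_⟩
        · rw [hYe, Finset.card_erase_of_mem htX, hXr]
        · have hsub2 : Y ∩ A ⊆ X ∩ A := by
            rw [hYe]
            exact Finset.inter_subset_inter (Finset.erase_subset t X) subset_rfl
          have := Finset.card_le_card hsub2
          omega
      · have hYi : Y = insert t X := by
          rw [hY']
          ext u
          simp only [Finset.mem_symmDiff, Finset.mem_singleton, Finset.mem_insert]
          constructor
          · rintro (⟨hu, hne⟩ | ⟨rfl, hno⟩)
            · exact Or.inr hu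
            · exact Or.inl rfl
          · rintro (rfl | hu)
            · exact Or.inr ⟨rfl, htX⟩
            · rcases eq_or_ne u t with rfl | hne
              · exact Or.inr ⟨rfl, htX⟩
              · exact Or.inl ⟨hu, hne⟩
        apply Finset.mem_union_right
        refine Finset.mem_filter.mpr ⟨Finset.mem_filter.mpr ⟨Finset.mem_univ _, ?_⟩, ?_⟩
        · rw [hYi, Finset.card_insert_of_notMem htX, hXr]
        · have hsub2 : Y ∩ A ⊆ insert t (X ∩ A) := by
            rw [hYi]
            intro u hu
            simp only [Finset.mem_inter, Finset.mem_insert] at hu ⊢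
            rcases hu with ⟨rfl | hu, hA2⟩
            · exact Or.inl rfl
            · exact Or.inr ⟨hu, hA2⟩
          have h1 := Finset.card_le_card hsub2
          have h2 := Finset.card_insert_le t (X ∩ A)
          omega
    have hB₁card : B₁.card = ∑ j ∈ range (b+1), F a c (r-1) j := hcnt (r-1) (b+1)
    have hB₂card : B₂.card = ∑ j ∈ range (b+2), F a c (r+1) j := hcnt (r+1) (b+2)
    -- the two exact identities
    have hgbeq : g b = ∑ j ∈ range (b+1), F a c r j := rfl
    have hgen1 : (s+1) * B₁.card ≤ r * g b + a * F a c (r-1) b := by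
      have h := gen a c r hr1 (by omega) b
      have e : a + c - r + 1 = s + 1 := by omega
      rw [e] at h
      rw [hB₁card, hgbeq, h]
      exact Nat.add_le_add_left (Nat.mul_le_mul_right _ (Nat.sub_le a b)) _
    have hgen2 : (r+1) * B₂.card ≤ s * (g b + F a c r (b+1)) := by
      have h := gen a c (r+1) (by omega) (by omega) (b+1)
      have e : a + c - (r+1) + 1 = s := by omega
      have e2 : r + 1 - 1 = r := by omega
      rw [e, e2] at h
      have hsum : g b + F a c r (b+1) = ∑ j ∈ range (b+1+1), F a c r j := by
        rw [hgbeq]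
        exact (sum_range_succ _ _).symm
      have e3 : b + 2 = b + 1 + 1 := by omega
      rw [hB₂card, hsum, h, e3]
      exact Nat.le_add_right _ _
    have hgb_le : g b ≤ m + F a c r b := by
      rw [hgb_split, hSb]
      exact Nat.add_le_add_right hA₀m _
    -- real-number phase
    have hsqrtpos : (0:ℝ) < Real.sqrt n := Real.sqrt_pos.mpr hnR
    have hcard_bound : (cubeBoundary n C').card ≤ B₁.card + B₂.card :=
      (Finset.card_le_card hbound).trans (Finset.card_union_le _ _)
    have hmaxF : ∀ k jj, k ≤ n → ε*n ≤ (k:ℝ)+1 → ε*n ≤ ((n-k:ℕ):ℝ)+1 →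
        (F a c k jj : ℝ) ≤ 6/(ε*Real.sqrt n) * (n.choose k) := by
      intro k jj hk h1 h2
      have h := maxF_le n k jj hn1 hk ε hε0 h1 h2
      rw [hc, ha]
      exact h
    have hrR : ε * n ≤ (r:ℝ) := hr
    have hsR : ε * n ≤ (s:ℝ) := hs
    have hrnR : (r:ℝ) ≤ (n:ℝ) := by exact_mod_cast hrn
    have hsnR : (s:ℝ) ≤ (n:ℝ) := by exact_mod_cast (show s ≤ n by omega)
    have haR : (a:ℝ) ≤ (n:ℝ) := by exact_mod_cast (show a ≤ n by omega)
    have hΦ1 : (F a c (r-1) b : ℝ)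
        ≤ 6/(ε*Real.sqrt n) * ((n.choose (r-1) : ℕ) : ℝ) := by
      apply hmaxF (r-1) b (by omega)
      · rw [Nat.cast_sub hr1]
        push_cast
        linarith [hrR]
      · rw [show n-(r-1) = s+1 from by omega]
        push_cast
        linarith [hsR]
    have hΦ2 : (F a c r (b+1) : ℝ)
        ≤ 6/(ε*Real.sqrt n) * ((n.choose r : ℕ) : ℝ) := by
      apply hmaxF r (b+1) hrn
      · push_cast; linarith [hrR]
      · rw [show n-r = s from by omega]
        push_cast
        linarith [hsR]
    have hΦ3 : (F a c r b : ℝ)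
        ≤ 6/(ε*Real.sqrt n) * ((n.choose r : ℕ) : ℝ) := by
      apply hmaxF r b hrn
      · push_cast; linarith [hrR]
      · rw [show n-r = s from by omega]
        push_cast
        linarith [hsR]
    have hs1R : (0:ℝ) < (s:ℝ)+1 := by positivity
    have hidR : ((n.choose (r-1) : ℕ) : ℝ) * ((s:ℝ)+1)
        = ((n.choose r : ℕ) : ℝ) * (r:ℝ) := by
      have hid := Nat.choose_succ_right_eq n (r-1)
      rw [show r-1+1 = r from by omega, show n - (r-1) = s+1 from by omega] at hid
      exact_mod_cast hid.symm
    have hεr : ε * (r:ℝ) ≤ (s:ℝ)+1 := by nlinarith [hrnR, hsR, hε0.le]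
    have hεs : ε * (s:ℝ) ≤ (r:ℝ)+1 := by nlinarith [hsnR, hrR, hε0.le]
    have hεa : ε * (a:ℝ) ≤ (s:ℝ)+1 := by nlinarith [haR, hsR, hε0.le]
    have hD1 : ε * ((n.choose (r-1) : ℕ) : ℝ) ≤ ((n.choose r : ℕ) : ℝ) := by
      refine le_of_mul_le_mul_right ?_ hs1R
      have hDnn : (0:ℝ) ≤ ((n.choose r : ℕ) : ℝ) := by positivity
      calc ε * ((n.choose (r-1) : ℕ) : ℝ) * ((s:ℝ)+1)
          = ε * (((n.choose (r-1) : ℕ) : ℝ) * ((s:ℝ)+1)) := by ring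
        _ = ε * (((n.choose r : ℕ) : ℝ) * (r:ℝ)) := by rw [hidR]
        _ = ((n.choose r : ℕ) : ℝ) * (ε * (r:ℝ)) := by ring
        _ ≤ ((n.choose r : ℕ) : ℝ) * ((s:ℝ)+1) := mul_le_mul_of_nonneg_left hεr hDnn
    rw [hC'card]
    refine assemble ε (Real.sqrt n) (r:ℝ) (s:ℝ) (a:ℝ) (m:ℝ) ((g b : ℕ):ℝ)
      ((B₁.card : ℕ):ℝ) ((B₂.card : ℕ):ℝ) (((cubeBoundary n C').card : ℕ):ℝ)
      ((F a c (r-1) b : ℕ):ℝ) ((F a c r (b+1) : ℕ):ℝ) ((F a c r b : ℕ):ℝ)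
      ((n.choose (r-1) : ℕ):ℝ) ((n.choose r : ℕ):ℝ)
      hε0 hεle1 hsqrtpos (by positivity) (by positivity) (by positivity)
      (by positivity) (by positivity) (by positivity) (by positivity) (by positivity)
      (by positivity) (by positivity) (by exact_mod_cast hcard_bound)
      (by exact_mod_cast hgen1)
      (by exact_mod_cast hgen2) (by exact_mod_cast hgb_le)
      hεa hεr hεs hΦ1 hΦ2 hΦ3 hD1
end

section
/- For every n ≥ 3 and every r ∈ ℕ with r ≤ n/2, one has |S_n(r)| ≥ |B_n(r)|/√n, i.e., C(n,r) ≥ (Σ_{k=0}^{r} C(n,k)) / √n. -/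
/-!
Write `B` for the ball sum. For `k ≤ r` the ratio `C(n,k)/C(n,r)` only grows when `n` shrinks,
so `B / C(n,r)` is at most the same quantity for `n = 2r`, which by the symmetry of the binomial row is `(4^r / C(2r,r) + 1) / 2`. The central binomial coefficient
satisfies `4^r ≤ 2√r · C(2r,r)`, hence `B / C(n,r) ≤ √r + 1/2 ≤ √(n/2) + 1/2 ≤ √n` for `n ≥ 3`.
-/

open Finset

namespace Nat

theorem choose_mul_choose_le_choose_mul_choose {n m k r : ℕ} (hmn : m ≤ n) (hkr : k ≤ r) :
    n.choose k * m.choose r ≤ n.choose r * m.choose k := by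
  induction r, hkr using Nat.le_induction with
  | base => rw [mul_comm]
  | succ r _ ih =>
    refine Nat.le_of_mul_le_mul_right ?_ r.succ_pos
    calc n.choose k * m.choose (r + 1) * (r + 1) = n.choose k * m.choose r * (m - r) := by
          rw [mul_assoc, choose_succ_right_eq, mul_assoc]
      _ ≤ n.choose r * m.choose k * (n - r) := by gcongr
      _ = n.choose (r + 1) * m.choose k * (r + 1) := by
          rw [mul_right_comm, ← choose_succ_right_eq, mul_right_comm]

theorem sum_range_choose_mul_choose_le {n m : ℕ} (hmn : m ≤ n) (r : ℕ) :
    (∑ k ∈ range (r + 1), n.choose k) * m.choose r ≤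
      n.choose r * ∑ k ∈ range (r + 1), m.choose k := by
  rw [sum_mul, mul_sum]
  exact sum_le_sum fun k hk ↦
    choose_mul_choose_le_choose_mul_choose hmn (Nat.lt_succ_iff.1 (mem_range.1 hk))

theorem two_mul_sum_range_choose_two_mul (m : ℕ) :
    2 * ∑ i ∈ range (m + 1), (2 * m).choose i = 4 ^ m + m.centralBinom := by
  have hreflect : ∑ i ∈ range (m + 1), (2 * m).choose i =
      ∑ i ∈ Ico m (2 * m + 1), (2 * m).choose i := by
    have := sum_Ico_reflect (2 * m).choose 0 (m := m + 1) (n := 2 * m) (by omega)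
    rw [show 2 * m + 1 - (m + 1) = m by omega, Nat.sub_zero, ← range_eq_Ico] at this
    rw [← this]
    exact sum_congr rfl fun i hi ↦ (choose_symm <| by linarith [mem_range.1 hi]).symm
  calc 2 * ∑ i ∈ range (m + 1), (2 * m).choose i
      = ∑ i ∈ range m, (2 * m).choose i + m.centralBinom +
          ∑ i ∈ Ico m (2 * m + 1), (2 * m).choose i := by
        rw [two_mul]; nth_rw 2 [hreflect]; rw [sum_range_succ, centralBinom]
    _ = 4 ^ m + m.centralBinom := by
        rw [add_right_comm, sum_range_add_sum_Ico _ (by omega), sum_range_choose, pow_mul]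
        rfl

theorem four_pow_sq_le_four_mul_self_mul_centralBinom_sq {n : ℕ} (hn : 0 < n) :
    (4 ^ n) ^ 2 ≤ 4 * n * n.centralBinom ^ 2 := by
  induction n, hn using Nat.le_induction with
  | base => simp [centralBinom, choose]
  | succ n _ ih =>
    refine Nat.le_of_mul_le_mul_right ?_ (pow_pos n.succ_pos 2)
    have hstep : 4 * n * (n + 1) ≤ (2 * n + 1) ^ 2 := by nlinarith
    calc (4 ^ (n + 1)) ^ 2 * (n + 1) ^ 2 = 16 * (n + 1) ^ 2 * (4 ^ n) ^ 2 := by ring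
      _ ≤ 16 * (n + 1) ^ 2 * (4 * n * n.centralBinom ^ 2) := by gcongr
      _ ≤ 4 * (n + 1) * (2 * (2 * n + 1) * n.centralBinom) ^ 2 := by nlinarith
      _ = 4 * (n + 1) * (n + 1).centralBinom ^ 2 * (n + 1) ^ 2 := by
          rw [← succ_mul_centralBinom_succ]; ring

end Nat

theorem add_le_two_mul_sqrt_mul {x X M : ℝ} (hx : 3 ≤ x) (hX : 0 ≤ X) (hM : 0 ≤ M)
    (h : X ^ 2 ≤ 2 * x * M ^ 2) : X + M ≤ 2 * √x * M := by
  obtain ⟨s, hs, rfl⟩ : ∃ s, 0 ≤ s ∧ x = s ^ 2 :=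
    ⟨√x, Real.sqrt_nonneg x, (Real.sq_sqrt (by linarith)).symm⟩
  rw [Real.sqrt_sq hs]
  -- `2 s² ≤ (2 s - 1)²` as soon as `s ≥ 1 + 1/√2 ≈ 1.707`, and `√3 > 1.72`.
  have hs_large : 43 / 25 ≤ s := by nlinarith
  nlinarith [mul_nonneg hM (sub_nonneg.2 hs_large)]

/-- For `n ≥ 3` and `r ≤ n/2`, one has `|S_n(r)| ≥ |B_n(r)|/√n`, i.e.
`C(n,r) ≥ (Σ_{k=0}^r C(n,k))/√n`. -/
theorem sphere_ge_ball_div_sqrt (n r : ℕ) (hn : 3 ≤ n) (hr : 2 * r ≤ n) :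
    (n.choose r : ℝ) ≥ (∑ k ∈ Finset.range (r + 1), (n.choose k : ℝ)) / Real.sqrt n := by
  set B := ∑ k ∈ range (r + 1), n.choose k
  have hball : 2 * B * r.centralBinom ≤ n.choose r * (4 ^ r + r.centralBinom) := by
    calc 2 * B * r.centralBinom = 2 * (B * (2 * r).choose r) := mul_assoc _ _ _
      _ ≤ 2 * (n.choose r * ∑ k ∈ range (r + 1), (2 * r).choose k) :=
          Nat.mul_le_mul_left 2 (Nat.sum_range_choose_mul_choose_le hr r)
      _ = n.choose r * (4 ^ r + r.centralBinom) := by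
          rw [mul_left_comm, Nat.two_mul_sum_range_choose_two_mul]
  have hcentral : (4 ^ r) ^ 2 ≤ 2 * n * r.centralBinom ^ 2 := by
    rcases r.eq_zero_or_pos with rfl | hr0
    · simp only [pow_zero, one_pow, Nat.centralBinom_zero, mul_one]; omega
    · exact (Nat.four_pow_sq_le_four_mul_self_mul_centralBinom_sq hr0).trans
        (Nat.mul_le_mul_right _ (by omega))
  have hsqrt := add_le_two_mul_sqrt_mul (x := n) (X := 4 ^ r) (M := r.centralBinom)
    (by exact_mod_cast hn) (by positivity) (by positivity) (by exact_mod_cast hcentral)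
  have hM : (0 : ℝ) < r.centralBinom := by exact_mod_cast r.centralBinom_pos
  rw [ge_iff_le, div_le_iff₀ (by positivity), ← Nat.cast_sum]
  refine le_of_mul_le_mul_right ?_ (mul_pos two_pos hM)
  calc (B : ℝ) * (2 * r.centralBinom) = 2 * B * r.centralBinom := by ring
    _ ≤ n.choose r * (4 ^ r + r.centralBinom) := by exact_mod_cast hball
    _ ≤ n.choose r * (2 * √n * r.centralBinom) := by gcongr
    _ = n.choose r * √n * (2 * r.centralBinom) := by ring
end

section
/- Let A ⊆ B_n(R) with n ≥ 80, 1 ≤ R ≤ n, and set ε := R/(2n) and A_R := A ∩ S_n(R). If |A_R| ≥ (1 − 1.94ε)|A|, then the part of the vertex boundary of A in the Hamming ball graph B_n(R) lying in S_n(R−1) satisfies |∂_{B_n(R)} A ∩ S_n(R−1)| ≥ (√(2n)/(5n)) · ε · |A|. -/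
open Finset

set_option maxHeartbeats 1000000 in
/-- If the top layer `A_R := A ∩ S_n(R)` of `A ⊆ B_n(R)` satisfies
`|A_R| ≥ (1 − 1.94ε)|A|` where `ε := R/(2n)`, `n ≥ 80` and `1 ≤ R ≤ n`, then the part of
the vertex boundary of `A` lying in `S_n(R−1)` satisfies
`|∂_{B_n(R)} A ∩ S_n(R−1)| ≥ (√(2n)/(5n))·ε·|A|`. -/
theorem large_top_layer (n R : ℕ) (hn : 80 ≤ n) (hR1 : 1 ≤ R) (hRn : R ≤ n)
    (A : Finset (Finset (Fin n))) (hA : A ⊆ hamBall n R)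
    (ε : ℝ) (hε : ε = (R : ℝ) / (2 * n))
    (htop : ((A ∩ sphere n R).card : ℝ) ≥ (1 - 1.94 * ε) * A.card) :
    (((ballBoundary n R A) ∩ sphere n (R - 1)).card : ℝ) ≥
      Real.sqrt (2 * n) / (5 * n) * ε * A.card := by
  classical
  set AR := A ∩ sphere n R with hARdef
  have hsized : (AR : Set (Finset (Fin n))).Sized R := by
    intro X hX
    simp only [hARdef, coe_inter, Set.mem_inter_iff, mem_coe, sphere, mem_filter] at hX
    exact hX.2.2
  -- local LYM
  have hshadow := Finset.card_mul_le_card_shadow_mul hsized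
  rw [Fintype.card_fin] at hshadow
  have hshsub : AR.shadow ⊆ sphere n (R - 1) := by
    intro Y hY
    simp only [sphere, mem_filter, mem_univ, true_and]
    exact hsized.shadow hY
  have hsub : AR.shadow \ A ⊆ (ballBoundary n R A) ∩ sphere n (R - 1) := by
    intro Y hY
    rw [mem_sdiff] at hY
    obtain ⟨hY1, hY2⟩ := hY
    rw [mem_inter]
    refine ⟨?_, hshsub hY1⟩
    obtain ⟨X, hX, a, ha, rfl⟩ := Finset.mem_shadow_iff.1 hY1
    have hXA : X ∈ A := (mem_inter.1 hX).1
    have hXcard : X.card = R := hsized hX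
    simp only [ballBoundary, hamBall, mem_filter, mem_univ, true_and]
    refine ⟨?_, hY2, X, hXA, ?_⟩
    · calc (X.erase a).card ≤ X.card := card_erase_le
        _ ≤ R := hXcard.le
    · rw [symmDiff_of_ge (erase_subset a X), sdiff_erase_self ha, card_singleton]
  -- counting
  have hdisj : Disjoint (A ∩ sphere n (R - 1)) AR := by
    rw [Finset.disjoint_left]
    intro X h1 h2
    have e1 : X.card = R - 1 := by
      have := (mem_inter.1 h1).2
      simpa [sphere] using this
    have e2 : X.card = R := hsized h2
    omega
  have hunion : (A ∩ sphere n (R - 1)).card + AR.card ≤ A.card := by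
    rw [← card_union_of_disjoint hdisj]
    exact card_le_card (union_subset (inter_subset_left) (inter_subset_left))
  have hcap : AR.shadow ∩ A ⊆ A ∩ sphere n (R - 1) := fun Y hY => by
    rw [mem_inter] at hY ⊢
    exact ⟨hY.2, hshsub hY.1⟩
  have hd : (AR.shadow \ A).card + (AR.shadow ∩ A).card = AR.shadow.card :=
    card_sdiff_add_card_inter _ _
  -- real variables
  obtain ⟨N, hN⟩ : ∃ x : ℝ, (n : ℝ) = x := ⟨_, rfl⟩
  obtain ⟨Rr, hRr⟩ : ∃ x : ℝ, (R : ℝ) = x := ⟨_, rfl⟩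
  obtain ⟨a, ha⟩ : ∃ x : ℝ, (A.card : ℝ) = x := ⟨_, rfl⟩
  obtain ⟨b, hb⟩ : ∃ x : ℝ, (AR.card : ℝ) = x := ⟨_, rfl⟩
  obtain ⟨s, hs⟩ : ∃ x : ℝ, (AR.shadow.card : ℝ) = x := ⟨_, rfl⟩
  obtain ⟨c, hc⟩ : ∃ x : ℝ, ((A ∩ sphere n (R - 1)).card : ℝ) = x := ⟨_, rfl⟩
  obtain ⟨d, hd2⟩ : ∃ x : ℝ, (((ballBoundary n R A) ∩ sphere n (R - 1)).card : ℝ) = x := ⟨_, rfl⟩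
  have hN80 : (80 : ℝ) ≤ N := by rw [← hN]; exact_mod_cast hn
  have hRr1 : (1 : ℝ) ≤ Rr := by rw [← hRr]; exact_mod_cast hR1
  have hRrN : Rr ≤ N := by rw [← hRr, ← hN]; exact_mod_cast hRn
  have hNpos : (0 : ℝ) < N := by linarith
  have ht : ((n - R + 1 : ℕ) : ℝ) = N - Rr + 1 := by
    rw [← hN, ← hRr]; push_cast [Nat.cast_sub hRn]; ring
  have h1 : b * Rr ≤ s * (N - Rr + 1) := by
    rw [← hb, ← hs, ← ht, ← hRr]; exact_mod_cast hshadow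
  have h2 : d ≥ s - c := by
    have hd3 : ((AR.shadow \ A).card : ℝ) ≤ d := by
      rw [← hd2]; exact_mod_cast card_le_card hsub
    have hd4 : ((AR.shadow ∩ A).card : ℝ) ≤ c := by
      rw [← hc]; exact_mod_cast card_le_card hcap
    have hd5 : ((AR.shadow \ A).card : ℝ) + ((AR.shadow ∩ A).card : ℝ) = s := by
      rw [← hs]; exact_mod_cast hd
    linarith
  have h3 : c + b ≤ a := by rw [← hc, ← hb, ← ha]; exact_mod_cast hunion
  rw [hε, hN, hRr, ha, hb] at htop
  have h4 : N * b ≥ (N - 0.97 * Rr) * a := by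
    have hh : (1 - 1.94 * (Rr / (2 * N))) * a * N = (N - 0.97 * Rr) * a := by
      field_simp; ring
    have h5 : (1 - 1.94 * (Rr / (2 * N))) * a * N ≤ b * N :=
      mul_le_mul_of_nonneg_right htop (le_of_lt hNpos)
    rw [hh] at h5
    nlinarith [h5]
  -- sqrt bound
  have hS0 : (0 : ℝ) ≤ Real.sqrt (2 * N) := Real.sqrt_nonneg _
  have hS : Real.sqrt (2 * N) ≤ 0.3 * N - 9.7 := by
    have h7 : (2 * N : ℝ) ≤ (0.3 * N - 9.7) ^ 2 := by nlinarith [sq_nonneg (N - 80)]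
    calc Real.sqrt (2 * N) ≤ Real.sqrt ((0.3 * N - 9.7) ^ 2) := Real.sqrt_le_sqrt h7
      _ = |0.3 * N - 9.7| := by rw [Real.sqrt_sq_eq_abs]
      _ = 0.3 * N - 9.7 := abs_of_nonneg (by linarith)
  obtain ⟨S, hSdef⟩ : ∃ x : ℝ, Real.sqrt (2 * N) = x := ⟨_, rfl⟩
  rw [hSdef] at hS hS0
  obtain ⟨t, htdef⟩ : ∃ x : ℝ, N - Rr + 1 = x := ⟨_, rfl⟩
  rw [htdef] at h1
  have ht1 : (1 : ℝ) ≤ t := by rw [← htdef]; linarith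
  have ht2 : t ≤ N := by rw [← htdef]; linarith
  have ha0 : (0 : ℝ) ≤ a := by rw [← ha]; positivity
  have hb0 : (0 : ℝ) ≤ b := by rw [← hb]; positivity
  have hc0 : (0 : ℝ) ≤ c := by rw [← hc]; positivity
  have htpos : (0 : ℝ) < t := by linarith
  -- key polynomial inequality
  have P : S * Rr * a * t + 10 * N ^ 2 * t * (a - b) ≤ 10 * N ^ 2 * (b * Rr) := by
    rw [← htdef]
    nlinarith [mul_nonneg (mul_nonneg ha0 (by linarith : (0:ℝ) ≤ Rr))
        (mul_nonneg (by linarith : (0:ℝ) ≤ 0.3 * N - 9.7) (by linarith : (0:ℝ) ≤ Rr - 1)),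
      mul_nonneg (mul_nonneg ha0 (by linarith : (0:ℝ) ≤ Rr))
        (mul_nonneg (by linarith : (0:ℝ) ≤ 0.3 * N - 9.7 - S) (by linarith : (0:ℝ) ≤ N - Rr + 1)),
      mul_le_mul_of_nonneg_left h4 (by positivity : (0:ℝ) ≤ 10 * N * (N + 1))]
  -- conclude
  rw [ge_iff_le, hd2, hε, hN, hRr, ha, hSdef]
  have key : S / (5 * N) * (Rr / (2 * N)) * a = S * Rr * a / (10 * N ^ 2) := by
    rw [div_mul_div_comm, div_mul_eq_mul_div, show (5 * N) * (2 * N) = 10 * N ^ 2 from by ring]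
  rw [key]
  have hP2 : S * Rr * a * t / (10 * N ^ 2) ≤ b * Rr - t * (a - b) := by
    rw [div_le_iff₀ (by positivity : (0:ℝ) < 10 * N ^ 2)]
    nlinarith [P]
  have h8 : S * Rr * a / (10 * N ^ 2) + (a - b) ≤ b * Rr / t := by
    rw [le_div_iff₀ htpos]
    have e : (S * Rr * a / (10 * N ^ 2) + (a - b)) * t
        = S * Rr * a * t / (10 * N ^ 2) + (a - b) * t := by ring
    rw [e]
    linarith [hP2]
  have h9 : b * Rr / t ≤ s := by
    rw [div_le_iff₀ htpos]; linarith
  linarith [h8, h9, h2, h3]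
end

section
/- There exists an absolute constant C > 0 such that for all n, r, k ∈ ℕ with 1 ≤ r ≤ n − 1, setting m := ⌊n/2⌋, the hypergeometric probability satisfies C(m,k)·C(n−m, r−k) / C(n,r) ≤ C·√(n / (r(n−r))). -/
/-!
The hypergeometric probability is symmetric in the sample size `r` and the number `m` of marked
items, so it equals `C(r,k)·C(n-r,m-k)/C(n,m)`. Both binomials in the numerator are bounded by
central ones, and the induction `(s+1)·C(2s+2,s+1) = 2(2s+1)·C(2s,s)` gives
`16^s/(4s+1) ≤ C(2s,s)² ≤ 16^s/(2s+1)`, whence `j·C(j,i)² ≤ 4^j` and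
`4^n ≤ (2n+3)·C(n,⌊n/2⌋)²`.
Multiplying out, the square of the probability is at most `4n/(r(n-r))`, so `C = 2` works.
-/

namespace Nat

theorem choose_mul_choose_sub_comm (N a b : ℕ) :
    N.choose a * (N - a).choose b = N.choose b * (N - b).choose a := by
  have ha := choose_mul (n := N) (le_add_right a b)
  have hb := choose_mul (n := N) (le_add_left b a)
  rw [Nat.add_sub_cancel_left] at ha
  rw [Nat.add_sub_cancel] at hb
  rw [← ha, ← hb, choose_symm_add]

theorem choose_mul_choose_mul_choose_comm {n m r k : ℕ} (hkm : k ≤ m) (hkr : k ≤ r) :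
    n.choose r * (r.choose k * (n - r).choose (m - k)) =
      n.choose m * (m.choose k * (n - m).choose (r - k)) := by
  rw [← mul_assoc, choose_mul hkr, ← mul_assoc, choose_mul hkm, mul_assoc, mul_assoc,
    show n - r = n - k - (r - k) by omega, show n - m = n - k - (m - k) by omega,
    choose_mul_choose_sub_comm]

theorem centralBinom_succ_eq_two_mul_choose (s : ℕ) :
    centralBinom (s + 1) = 2 * (2 * s + 1).choose s := by
  rw [centralBinom_eq_two_mul_choose, show 2 * (s + 1) = 2 * s + 1 + 1 by ring,
    choose_succ_succ', choose_symm_half]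
  ring

theorem two_mul_add_one_mul_centralBinom_sq_le (s : ℕ) :
    (2 * s + 1) * centralBinom s ^ 2 ≤ 16 ^ s := by
  induction s with
  | zero => simp
  | succ s ih =>
    have hrec := succ_mul_centralBinom_succ s
    refine le_of_mul_le_mul_left (a := (s + 1) ^ 2) ?_ (by positivity)
    calc (s + 1) ^ 2 * ((2 * (s + 1) + 1) * centralBinom (s + 1) ^ 2)
        = (2 * s + 3) * ((s + 1) * centralBinom (s + 1)) ^ 2 := by ring
      _ = 4 * ((2 * s + 3) * (2 * s + 1)) * ((2 * s + 1) * centralBinom s ^ 2) := by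
          rw [hrec]; ring
      _ ≤ 4 * (4 * (s + 1) ^ 2) * 16 ^ s := Nat.mul_le_mul (by nlinarith) ih
      _ = (s + 1) ^ 2 * 16 ^ (s + 1) := by ring

theorem sixteen_pow_le_four_mul_add_one_mul_centralBinom_sq (s : ℕ) :
    16 ^ s ≤ (4 * s + 1) * centralBinom s ^ 2 := by
  induction s with
  | zero => simp
  | succ s ih =>
    have hrec := succ_mul_centralBinom_succ s
    refine le_of_mul_le_mul_left (a := (s + 1) ^ 2) ?_ (by positivity)
    calc (s + 1) ^ 2 * 16 ^ (s + 1) = 16 * (s + 1) ^ 2 * 16 ^ s := by ring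
      _ ≤ 16 * (s + 1) ^ 2 * ((4 * s + 1) * centralBinom s ^ 2) := by gcongr
      _ ≤ 4 * (4 * s + 5) * (2 * s + 1) ^ 2 * centralBinom s ^ 2 := by
          rw [← mul_assoc]; exact Nat.mul_le_mul_right _ (by nlinarith)
      _ = (s + 1) ^ 2 * ((4 * (s + 1) + 1) * centralBinom (s + 1) ^ 2) := by
          rw [show (s + 1) ^ 2 * ((4 * (s + 1) + 1) * centralBinom (s + 1) ^ 2)
            = (4 * s + 5) * ((s + 1) * centralBinom (s + 1)) ^ 2 by ring, hrec]
          ring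

theorem mul_choose_half_sq_le_four_pow (n : ℕ) : n * n.choose (n / 2) ^ 2 ≤ 4 ^ n := by
  obtain ⟨s, rfl | rfl⟩ := n.even_or_odd'
  · rw [show 2 * s / 2 = s by omega, ← centralBinom_eq_two_mul_choose, pow_mul]
    have := two_mul_add_one_mul_centralBinom_sq_le s
    norm_num
    nlinarith
  · have h := two_mul_add_one_mul_centralBinom_sq_le (s + 1)
    rw [centralBinom_succ_eq_two_mul_choose, show 16 ^ (s + 1) = 4 * 4 ^ (2 * s + 1) by
      rw [show 16 = 4 ^ 2 by rfl, ← pow_mul]; ring] at h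
    rw [show (2 * s + 1) / 2 = s by omega]
    nlinarith

theorem four_pow_le_mul_choose_half_sq (n : ℕ) :
    4 ^ n ≤ (2 * n + 3) * n.choose (n / 2) ^ 2 := by
  obtain ⟨s, rfl | rfl⟩ := n.even_or_odd'
  · rw [show 2 * s / 2 = s by omega, ← centralBinom_eq_two_mul_choose, pow_mul]
    have := sixteen_pow_le_four_mul_add_one_mul_centralBinom_sq s
    norm_num
    nlinarith
  · have h := sixteen_pow_le_four_mul_add_one_mul_centralBinom_sq (s + 1)
    rw [centralBinom_succ_eq_two_mul_choose, show 16 ^ (s + 1) = 4 * 4 ^ (2 * s + 1) by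
      rw [show 16 = 4 ^ 2 by rfl, ← pow_mul]; ring] at h
    rw [show (2 * s + 1) / 2 = s by omega]
    nlinarith

theorem mul_choose_sq_le_four_pow (n k : ℕ) : n * n.choose k ^ 2 ≤ 4 ^ n :=
  (Nat.mul_le_mul_left n (Nat.pow_le_pow_left (choose_le_middle k n) 2)).trans
    (mul_choose_half_sq_le_four_pow n)

theorem mul_sub_mul_sq_choose_mul_choose_le_four_pow {n r : ℕ} (hrn : r ≤ n) (k j : ℕ) :
    r * (n - r) * (r.choose k * (n - r).choose j) ^ 2 ≤ 4 ^ n := by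
  calc r * (n - r) * (r.choose k * (n - r).choose j) ^ 2
      = (r * r.choose k ^ 2) * ((n - r) * (n - r).choose j ^ 2) := by ring
    _ ≤ 4 ^ r * 4 ^ (n - r) :=
        Nat.mul_le_mul (mul_choose_sq_le_four_pow r k) (mul_choose_sq_le_four_pow (n - r) j)
    _ = 4 ^ n := by rw [← pow_add, Nat.add_sub_cancel' hrn]

theorem mul_sub_mul_sq_choose_half_mul_choose_le {n r k : ℕ} (hkr : k ≤ r) (hrn : r ≤ n)
    (hn : 2 ≤ n) :
    r * (n - r) * ((n / 2).choose k * (n - n / 2).choose (r - k)) ^ 2 ≤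
      4 * n * n.choose r ^ 2 := by
  set m := n / 2
  rcases lt_or_ge m k with hmk | hkm
  · simp [choose_eq_zero_of_lt hmk]
  have hsymm := choose_mul_choose_mul_choose_comm (n := n) hkm hkr
  have hmid : 4 ^ n ≤ 4 * n * n.choose m ^ 2 :=
    (four_pow_le_mul_choose_half_sq n).trans (Nat.mul_le_mul_right _ (by omega))
  refine le_of_mul_le_mul_left (a := n.choose m ^ 2) ?_ 
    (pow_pos (choose_pos (n.div_le_self 2)) 2)
  calc n.choose m ^ 2 * (r * (n - r) * (m.choose k * (n - m).choose (r - k)) ^ 2)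
      = r * (n - r) * (n.choose m * (m.choose k * (n - m).choose (r - k))) ^ 2 := by ring
    _ = n.choose r ^ 2 * (r * (n - r) * (r.choose k * (n - r).choose (m - k)) ^ 2) := by
        rw [← hsymm]; ring
    _ ≤ n.choose r ^ 2 * (4 * n * n.choose m ^ 2) :=
        Nat.mul_le_mul_left _ ((mul_sub_mul_sq_choose_mul_choose_le_four_pow hrn _ _).trans hmid)
    _ = n.choose m ^ 2 * (4 * n * n.choose r ^ 2) := by ring

end Nat

/-- There is an absolute constant `C > 0` bounding the hypergeometric probability mass
function with parameters `r`, `m := ⌊n/2⌋`, `n` (which vanishes for `k > r`):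
`C(m,k)·C(n−m,r−k)/C(n,r) ≤ C·√(n/(r(n−r)))` whenever `1 ≤ r ≤ n − 1`. -/
theorem hypergeometric_pmf_bound :
    ∃ C : ℝ, 0 < C ∧ ∀ n r k : ℕ, 1 ≤ r → r < n →
      (if k ≤ r then ((n / 2).choose k * (n - n / 2).choose (r - k) : ℝ) else 0) /
          (n.choose r : ℝ) ≤
        C * Real.sqrt ((n : ℝ) / ((r : ℝ) * ((n : ℝ) - (r : ℝ)))) := by
  refine ⟨2, two_pos, fun n r k hr hrn => ?_⟩
  split_ifs with hkr
  swap
  · rw [zero_div]; positivity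
  have key : (r : ℝ) * ((n : ℝ) - r) * ((n / 2).choose k * (n - n / 2).choose (r - k)) ^ 2 ≤
      4 * n * n.choose r ^ 2 := by
    rw [← Nat.cast_sub hrn.le]
    exact_mod_cast Nat.mul_sub_mul_sq_choose_half_mul_choose_le hkr hrn.le (by omega)
  have hchoose : (0 : ℝ) < n.choose r := by exact_mod_cast Nat.choose_pos hrn.le
  have hvar : (0 : ℝ) < r * ((n : ℝ) - r) := by
    have : (r : ℝ) < n := by exact_mod_cast hrn
    have : (0 : ℝ) < r := by exact_mod_cast hr
    positivity
  rw [← Real.sqrt_sq zero_le_two, ← Real.sqrt_mul (sq_nonneg 2)]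
  apply Real.le_sqrt_of_sq_le
  rw [div_pow, div_le_iff₀ (by positivity), mul_div_assoc', div_mul_eq_mul_div,
    le_div_iff₀ hvar]
  linarith
end

section
/- Let r, s be integers with 2 ≤ r ≤ s, and set n := r + s, c := √(n/(rs)), c₀ := √((n−1)/(r(s−1))), and t := s/(r+1) − r/(s+1). Then (r·c₀ − t)/(n·c₀ − s·c) < (t + r)/(s·c). -/
set_option maxHeartbeats 1000000


/-- For integers `2 ≤ r ≤ s`, with `n := r + s`, `c := √(n/(rs))`,
`c₀ := √((n−1)/(r(s−1)))` and `t := s/(r+1) − r/(s+1)`, one has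
`(rc₀ − t)/(nc₀ − sc) < (t + r)/(sc)`. -/
theorem aux_ineq_one (r s : ℕ) (hr : 2 ≤ r) (hrs : r ≤ s)
    (n c c₀ t : ℝ)
    (hn : n = (r : ℝ) + (s : ℝ))
    (hc : c = Real.sqrt (n / ((r : ℝ) * (s : ℝ))))
    (hc₀ : c₀ = Real.sqrt ((n - 1) / ((r : ℝ) * ((s : ℝ) - 1))))
    (ht : t = (s : ℝ) / ((r : ℝ) + 1) - (r : ℝ) / ((s : ℝ) + 1)) :
    ((r : ℝ) * c₀ - t) / (n * c₀ - (s : ℝ) * c) < (t + (r : ℝ)) / ((s : ℝ) * c) := by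
  have hR : (2:ℝ) ≤ (r:ℝ) := by exact_mod_cast hr
  have hRS : (r:ℝ) ≤ (s:ℝ) := by exact_mod_cast hrs
  set R := (r:ℝ) with hRdef
  set S := (s:ℝ) with hSdef
  have hS : (2:ℝ) ≤ S := le_trans hR hRS
  have hRpos : 0 < R := by linarith
  have hSpos : 0 < S := by linarith
  have hnpos : 0 < n := by rw [hn]; linarith
  have hd1 : 0 < n / (R * S) := div_pos hnpos (by positivity)
  have hd2 : 0 < (n - 1) / (R * (S - 1)) := by
    apply div_pos
    · rw [hn]; linarith
    · have : 0 < S - 1 := by linarith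
      positivity
  have hc2 : c ^ 2 = n / (R * S) := by rw [hc]; exact Real.sq_sqrt hd1.le
  have hc02 : c₀ ^ 2 = (n - 1) / (R * (S - 1)) := by rw [hc₀]; exact Real.sq_sqrt hd2.le
  have hcpos : 0 < c := by rw [hc]; exact Real.sqrt_pos.mpr hd1
  have hc0pos : 0 < c₀ := by rw [hc₀]; exact Real.sqrt_pos.mpr hd2
  have hcc0 : c < c₀ := by
    rw [hc, hc₀]
    apply Real.sqrt_lt_sqrt hd1.le
    rw [div_lt_div_iff₀ (by positivity) (by nlinarith)]
    rw [hn]; nlinarith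
  have hden : 0 < n * c₀ - S * c := by
    have h1 : S * c < S * c₀ := by nlinarith
    have h2 : S * c₀ < n * c₀ := by rw [hn]; nlinarith
    linarith
  -- key algebraic facts
  have hD : (0:ℝ) < (R + 1) * (S + 1) := by positivity
  have htq : t * ((R + 1) * (S + 1)) = S * (S + 1) - R * (R + 1) := by
    rw [ht]; field_simp
  -- the squared quantity: (R*S*c)^2 = n * (R*S)
  have hx2 : (R * S * c) ^ 2 = n * (R * S) := by
    have : (R * S * c) ^ 2 = (R * S) ^ 2 * (c ^ 2) := by ring
    rw [this, hc2]
    field_simp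
  -- M := n*(t+R) - R*S is nonnegative
  have hMD : 0 ≤ (n * (t + R) - R * S) * ((R + 1) * (S + 1)) := by
    have key : (n * (t + R) - R * S) * ((R + 1) * (S + 1))
        = n * ((S * (S + 1) - R * (R + 1)) + R * ((R + 1) * (S + 1)))
          - R * S * ((R + 1) * (S + 1)) := by
      linear_combination n * htq
    rw [key, hn]
    have hu : 0 ≤ R - 2 := by linarith
    have hv : 0 ≤ S - R := by linarith
    set u := R - 2 with hu'
    set v := S - R with hv'
    have hRu : R = u + 2 := by rw [hu']; ring
    have hSu : S = u + 2 + v := by rw [hv', hu']; ring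
    rw [hRu, hSu]
    have expand : ((u+2) + (u+2+v)) * (((u+2+v) * ((u+2+v) + 1) - (u+2) * ((u+2) + 1))
          + (u+2) * (((u+2) + 1) * ((u+2+v) + 1)))
          - (u+2) * (u+2+v) * (((u+2) + 1) * ((u+2+v) + 1))
        = 36 + 32*v + 9*v^2 + v^3 + 60*u + 34*u*v + 4*u*v^2 + 37*u^2 + 11*u^2*v
          + 10*u^3 + u^3*v + u^4 := by ring
    rw [expand]
    positivity
  have hM : 0 ≤ n * (t + R) - R * S := by
    by_contra h
    push_neg at h
    have := mul_neg_of_neg_of_pos h hD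
    linarith
  -- squared inequality: n*(R*S) ≤ (n*(t+R) - R*S)^2
  have hsq : n * (R * S) ≤ (n * (t + R) - R * S) ^ 2 := by
    have hP : n * (R * S) * ((R + 1) * (S + 1)) ^ 2
        ≤ ((n * (t + R) - R * S) * ((R + 1) * (S + 1))) ^ 2 := by
      have key : (n * (t + R) - R * S) * ((R + 1) * (S + 1))
          = n * ((S * (S + 1) - R * (R + 1)) + R * ((R + 1) * (S + 1)))
            - R * S * ((R + 1) * (S + 1)) := by
        linear_combination n * htq
      rw [key, hn]
      have hu : 0 ≤ R - 2 := by linarith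
      have hv : 0 ≤ S - R := by linarith
      set u := R - 2 with hu'
      set v := S - R with hv'
      have hRu : R = u + 2 := by rw [hu']; ring
      have hSu : S = u + 2 + v := by rw [hv', hu']; ring
      rw [hRu, hSu]
      have expand : (((u+2) + (u+2+v)) * (((u+2+v) * ((u+2+v) + 1) - (u+2) * ((u+2) + 1))
            + (u+2) * (((u+2) + 1) * ((u+2+v) + 1)))
            - (u+2) * (u+2+v) * (((u+2) + 1) * ((u+2+v) + 1))) ^ 2
          - ((u+2) + (u+2+v)) * ((u+2) * (u+2+v)) * ((((u+2) + 1) * ((u+2+v) + 1))) ^ 2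
          = 468*v + 718*v^2 + 432*v^3 + 127*v^4 + 18*v^5 + v^6 + 648*u + 1860*u*v
            + 1639*u*v^2 + 646*u*v^3 + 119*u*v^4 + 8*u*v^5 + 1836*u^2 + 2821*u^2*v
            + 1496*u^2*v^2 + 343*u^2*v^3 + 30*u^2*v^4 + 2214*u^3 + 2212*u^3*v
            + 694*u^3*v^2 + 74*u^3*v^3 + u^3*v^4 + 1473*u^4 + 988*u^4*v + 171*u^4*v^2
            + 5*u^4*v^3 + 584*u^5 + 254*u^5*v + 21*u^5*v^2 + 138*u^6 + 35*u^6*v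
            + u^6*v^2 + 18*u^7 + 2*u^7*v + u^8 := by ring
      have hsum : (0:ℝ) ≤ 468*v + 718*v^2 + 432*v^3 + 127*v^4 + 18*v^5 + v^6 + 648*u + 1860*u*v
            + 1639*u*v^2 + 646*u*v^3 + 119*u*v^4 + 8*u*v^5 + 1836*u^2 + 2821*u^2*v
            + 1496*u^2*v^2 + 343*u^2*v^3 + 30*u^2*v^4 + 2214*u^3 + 2212*u^3*v
            + 694*u^3*v^2 + 74*u^3*v^3 + u^3*v^4 + 1473*u^4 + 988*u^4*v + 171*u^4*v^2
            + 5*u^4*v^3 + 584*u^5 + 254*u^5*v + 21*u^5*v^2 + 138*u^6 + 35*u^6*v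
            + u^6*v^2 + 18*u^7 + 2*u^7*v + u^8 := by positivity
      linarith [expand, hsum]
    have hD2 : (0:ℝ) < ((R + 1) * (S + 1)) ^ 2 := by positivity
    nlinarith [hP, hD2]
  -- hence R*S*c ≤ n*(t+R) - R*S
  have hF2 : R * S * c ≤ n * (t + R) - R * S := by
    by_contra hcon
    push_neg at hcon
    have hb : (0:ℝ) < R * S * c := by positivity
    have h1 : (n * (t + R) - R * S) ^ 2 < (R * S * c) ^ 2 := by
      apply sq_lt_sq' _ hcon
      linarith
    linarith [hx2, hsq, h1]
  -- conclude
  rw [div_lt_div_iff₀ hden (mul_pos hSpos hcpos)]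
  have h1 : R * S * c < R * S * c₀ := mul_lt_mul_of_pos_left hcc0 (mul_pos hRpos hSpos)
  have h2 : (R * S + R * S * c) * c₀ ≤ (n * (t + R)) * c₀ := by
    apply mul_le_mul_of_nonneg_right _ hc0pos.le
    linarith
  nlinarith [h1, h2]
end

section
/- Let r, s be integers with 2 ≤ r ≤ s. Then √(1/r + 1/s) ≤ (s/(r+1) − r/(s+1)) · (1/r + 1/s) + r/s. -/
/-- For integers `2 ≤ r ≤ s`, one has
`√(1/r + 1/s) ≤ (s/(r+1) − r/(s+1))·(1/r + 1/s) + r/s`. -/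
theorem aux_ineq_three (r s : ℕ) (hr : 2 ≤ r) (hrs : r ≤ s) :
    Real.sqrt (1 / (r : ℝ) + 1 / (s : ℝ)) ≤
      ((s : ℝ) / ((r : ℝ) + 1) - (r : ℝ) / ((s : ℝ) + 1)) * (1 / (r : ℝ) + 1 / (s : ℝ)) +
        (r : ℝ) / (s : ℝ) := by
  have hr2 : (2:ℝ) ≤ (r:ℝ) := by exact_mod_cast hr
  have hrs' : (r:ℝ) ≤ (s:ℝ) := by exact_mod_cast hrs
  have hrp : (0:ℝ) < r := by linarith
  have hsp : (0:ℝ) < s := by linarith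
  set R : ℝ := (r:ℝ)
  set S : ℝ := (s:ℝ)
  set A : ℝ := 1/R + 1/S with hA
  have hApos : 0 < A := by positivity
  have key : Real.sqrt A ≤ (A * S / R + R / S) / 2 := by
    rw [show (A * S / R + R / S) / 2 = Real.sqrt (((A * S / R + R / S) / 2)^2) from
      (Real.sqrt_sq (by positivity)).symm]
    apply Real.sqrt_le_sqrt
    have h : ((A*S/R + R/S)/2)^2 - A = ((A*S/R - R/S)/2)^2 := by
      rw [hA]; field_simp; ring
    nlinarith [sq_nonneg ((A*S/R - R/S)/2)]
  have ha : 0 ≤ R - 2 := by linarith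
  have hb : 0 ≤ S - R := by linarith
  set a : ℝ := R - 2
  set b : ℝ := S - R
  have key2 : ((S/(R+1) - R/(S+1)) * A + R/S) - (A*S/R + R/S)/2 =
      (26*b+9*b^2+b^3+36*a+61*a*b+13*a*b^2+a*b^3+60*a^2+44*a^2*b+4*a^2*b^2
        +37*a^3+12*a^3*b+10*a^4+a^4*b+a^5) / (2*R^2*S*(R+1)*(S+1)) := by
    have hR1 : (0:ℝ) < R + 1 := by linarith
    have hS1 : (0:ℝ) < S + 1 := by linarith
    rw [hA]
    have hav : a = R - 2 := rfl
    have hbv : b = S - R := rfl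
    rw [hav, hbv]
    field_simp
    ring
  have hnum : 0 ≤ 26*b+9*b^2+b^3+36*a+61*a*b+13*a*b^2+a*b^3+60*a^2+44*a^2*b+4*a^2*b^2
        +37*a^3+12*a^3*b+10*a^4+a^4*b+a^5 := by positivity
  have hden : (0:ℝ) < 2*R^2*S*(R+1)*(S+1) := by positivity
  have key3 : (A*S/R + R/S)/2 ≤ (S/(R+1) - R/(S+1)) * A + R/S := by
    nlinarith [div_nonneg hnum (le_of_lt hden)]
  calc Real.sqrt A ≤ (A * S / R + R / S) / 2 := key
    _ ≤ (S/(R+1) - R/(S+1)) * A + R/S := key3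
end

section
/- For every ε ∈ (0, 1/2) and all n, R ∈ ℕ with εn ≤ R ≤ n/2, setting R₀ := ⌊R/2⌋, one has |B_n(R₀)| / |B_n(R)| ≤ (R/(2R − R₀))^{R − R₀} ≤ (2/3)^{R − R₀}. -/
open Finset

/-!
Going from `k` to `k + 1` multiplies `C(n, k)` by `(n - k) / (k + 1)`. When `k + d ≤ R ≤ n / 2`,
the `d` steps from `k` to `k + d` multiply it by at least `∏_{t < d} (R + 1 + t) / (R - t)`,
and Bernoulli's inequality bounds this product below by `((R + d) / R) ^ d`. Hence, with
`d = R - R₀`, every term of `|B_n(R₀)|` is at most `(R / (R + d)) ^ d` times the term of `|B_n(R)|`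
of index `d` higher. Finally `R + d = 2R - R₀` and `R ≤ 2d` give the base bound `2/3`.
-/

lemma sub_mul_add_succ_pow_le {r : ℝ} (hr : 0 ≤ r) (d : ℕ) :
    (r - d) * (r + d + 1) ^ d ≤ r * (r + d) ^ d := by
  rcases d with _ | e
  · simp
  set x : ℝ := r + (e + 1 : ℕ) + 1
  have hx0 : 0 ≤ x := by positivity
  have bernoulli :=
    pow_add_mul_le_add_pow (b := -1) hx0 (by simp only [x]; push_cast; linarith) (e + 1)
  have hx : x + -1 = r + (e + 1 : ℕ) := by ring
  rw [hx, Nat.add_sub_cancel, pow_succ] at bernoulli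
  have hxe : 0 ≤ x ^ e := by positivity
  have hrx : r ≤ x := by simp only [x]; linarith [(Nat.cast_nonneg (e + 1) : (0 : ℝ) ≤ _)]
  rw [pow_succ]
  -- multiply Bernoulli by `r` and use `r * (e + 1) * x ^ e ≤ (e + 1) * x ^ (e + 1)`
  nlinarith [mul_le_mul_of_nonneg_left hrx (mul_nonneg hxe (Nat.cast_nonneg (α := ℝ) (e + 1)))]

lemma sub_div_mul_div_pow_le {r : ℝ} (hr : 0 < r) (d : ℕ) :
    (r - d) / (r + d + 1) * (r / (r + d)) ^ d ≤ (r / (r + d + 1)) ^ (d + 1) := by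
  rw [div_pow, div_pow, div_mul_div_comm, div_le_div_iff₀ (by positivity) (by positivity)]
  calc (r - d) * r ^ d * (r + d + 1) ^ (d + 1)
      = r ^ d * (r + d + 1) * ((r - d) * (r + d + 1) ^ d) := by ring
    _ ≤ r ^ d * (r + d + 1) * (r * (r + d) ^ d) :=
      mul_le_mul_of_nonneg_left (sub_mul_add_succ_pow_le hr.le d) (by positivity)
    _ = r ^ (d + 1) * ((r + d + 1) * (r + d) ^ d) := by ring

lemma cast_choose_le_mul_choose_succ {n k : ℕ} {q : ℝ} (hk : k < n)
    (hq : (k + 1 : ℝ) ≤ q * (n - k)) : (n.choose k : ℝ) ≤ q * n.choose (k + 1) := by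
  have hnk : (0 : ℝ) < n - k := sub_pos.mpr (by exact_mod_cast hk)
  have pascal : (n.choose k : ℝ) * (n - k) = n.choose (k + 1) * (k + 1) := by
    rw [← Nat.cast_sub hk.le]
    exact_mod_cast (Nat.choose_succ_right_eq n k).symm
  refine le_of_mul_le_mul_right ?_ hnk
  calc (n.choose k : ℝ) * (n - k) = n.choose (k + 1) * (k + 1) := pascal
    _ ≤ n.choose (k + 1) * (q * (n - k)) := by gcongr
    _ = q * n.choose (k + 1) * (n - k) := by ring

lemma cast_choose_le_pow_mul_choose_add {n R d k : ℕ} (hn : 2 * R ≤ n) (hk : k + d ≤ R) :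
    (n.choose k : ℝ) ≤ ((R : ℝ) / (R + d)) ^ d * n.choose (k + d) := by
  induction d generalizing k with
  | zero => simp
  | succ d ih =>
    have hR : (0 : ℝ) < R := by exact_mod_cast (show 0 < R by omega)
    have hkR : (k + 1 : ℝ) ≤ R - d := by
      rw [le_sub_iff_add_le]; exact_mod_cast (show k + 1 + d ≤ R by omega)
    have hnk : (R + d + 1 : ℝ) ≤ n - k := by
      rw [le_sub_iff_add_le]; exact_mod_cast (show R + d + 1 + k ≤ n by omega)
    have first_step : (n.choose k : ℝ) ≤ (R - d) / (R + d + 1) * n.choose (k + 1) := by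
      refine cast_choose_le_mul_choose_succ (by omega) (hkR.trans ?_)
      rw [div_mul_eq_mul_div, le_div_iff₀ (by positivity)]
      exact mul_le_mul_of_nonneg_left hnk (by linarith)
    calc (n.choose k : ℝ) ≤ (R - d) / (R + d + 1) * n.choose (k + 1) := first_step
      _ ≤ (R - d) / (R + d + 1) * (((R : ℝ) / (R + d)) ^ d * n.choose (k + 1 + d)) :=
        mul_le_mul_of_nonneg_left (ih (by omega)) (div_nonneg (by linarith) (by positivity))
      _ = (R - d) / (R + d + 1) * ((R : ℝ) / (R + d)) ^ d * n.choose (k + (d + 1)) := by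
        rw [show k + 1 + d = k + (d + 1) by omega, mul_assoc]
      _ ≤ ((R : ℝ) / (R + (d + 1 : ℕ))) ^ (d + 1) * n.choose (k + (d + 1)) := by
        gcongr
        rw [Nat.cast_succ, ← add_assoc]
        exact sub_div_mul_div_pow_le hR d

lemma sum_range_choose_le_pow_mul_sum {n R d : ℕ} (hn : 2 * R ≤ n) (hd : d ≤ R) :
    ∑ k ∈ range (R - d + 1), (n.choose k : ℝ) ≤
      ((R : ℝ) / (R + d)) ^ d * ∑ k ∈ range (R + 1), (n.choose k : ℝ) := by
  calc ∑ k ∈ range (R - d + 1), (n.choose k : ℝ)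
      ≤ ∑ k ∈ range (R - d + 1), ((R : ℝ) / (R + d)) ^ d * n.choose (d + k) := by
        refine sum_le_sum fun k hk => ?_
        rw [add_comm d]
        exact cast_choose_le_pow_mul_choose_add hn (by rw [mem_range] at hk; omega)
    _ ≤ ((R : ℝ) / (R + d)) ^ d * ∑ k ∈ range (R + 1), (n.choose k : ℝ) := by
      have split : ∑ k ∈ range (R + 1), (n.choose k : ℝ) =
          ∑ k ∈ range d, (n.choose k : ℝ) + ∑ k ∈ range (R - d + 1), (n.choose (d + k) : ℝ) := by
        rw [← sum_range_add, show d + (R - d + 1) = R + 1 by omega]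
      rw [← mul_sum, split]
      exact mul_le_mul_of_nonneg_left (le_add_of_nonneg_left (by positivity)) (by positivity)

theorem ball_ratio_bound_general (n R : ℕ) (h2 : 2 * R ≤ n) :
    (∑ k ∈ Finset.range (R / 2 + 1), (n.choose k : ℝ)) /
        (∑ k ∈ Finset.range (R + 1), (n.choose k : ℝ)) ≤
      ((R : ℝ) / (2 * (R : ℝ) - ((R / 2 : ℕ) : ℝ))) ^ (R - R / 2) ∧
    ((R : ℝ) / (2 * (R : ℝ) - ((R / 2 : ℕ) : ℝ))) ^ (R - R / 2) ≤
      ((2 : ℝ) / 3) ^ (R - R / 2) := by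
  set d := R - R / 2
  have hR₀ : R / 2 = R - d := by omega
  have hbase : 2 * (R : ℝ) - ((R / 2 : ℕ) : ℝ) = R + d := by
    rw [hR₀, Nat.cast_sub (by omega)]; ring
  have hball : (0 : ℝ) < ∑ k ∈ range (R + 1), (n.choose k : ℝ) :=
    sum_pos' (fun _ _ => by positivity) ⟨0, by simp⟩
  rw [hbase, hR₀, div_le_iff₀ hball]
  refine ⟨sum_range_choose_le_pow_mul_sum h2 (by omega), ?_⟩
  refine pow_le_pow_left₀ (by positivity) ?_ d
  refine div_le_of_le_mul₀ (by positivity) (by norm_num) ?_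
  have : (R : ℝ) ≤ 2 * d := by exact_mod_cast (show R ≤ 2 * d by omega)
  linarith

/-- For `ε ∈ (0,1/2)` and `εn ≤ R ≤ n/2`, with `R₀ := ⌊R/2⌋` one has
`|B_n(R₀)|/|B_n(R)| ≤ (R/(2R − R₀))^{R−R₀} ≤ (2/3)^{R−R₀}`. -/
theorem ball_ratio_bound (ε : ℝ) (hε0 : 0 < ε) (hε1 : ε < 1/2) (n R : ℕ)
    (h1 : ε * n ≤ R) (h2 : 2 * R ≤ n) :
    (∑ k ∈ Finset.range (R / 2 + 1), (n.choose k : ℝ)) /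
        (∑ k ∈ Finset.range (R + 1), (n.choose k : ℝ)) ≤
      ((R : ℝ) / (2 * (R : ℝ) - ((R / 2 : ℕ) : ℝ))) ^ (R - R / 2) ∧
    ((R : ℝ) / (2 * (R : ℝ) - ((R / 2 : ℕ) : ℝ))) ^ (R - R / 2) ≤
      ((2 : ℝ) / 3) ^ (R - R / 2) :=
  ball_ratio_bound_general n R h2
end
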